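/- arXiv:1703.07050 — 7 statements merged into one kernel-verified Lean document; each statement's English description precedes it below -/
import Mathlib

section
/- Let n be a positive integer, let L > 0, θ ≥ 0, τ > 0 and c be real numbers. Let b_{ik} (1 ≤ k ≤ i ≤ n) and b̃_{ik} (1 ≤ i ≤ k ≤ n) be positive numbers, all bounded below by τ, satisfying for all i and k: ∑_{l=1}^{i} b_{il} + ∑_{l=i}^{n} b̃_{il} = c and ∑_{l=k}^{n} b_{lk} + ∑_{l=1}^{k} b̃_{lk} = c. Let g be a continuous function on (0,L], differentiable with g'(a) ≤ −θ for all a ∈ (0,L]. Then for all (a_1,…,a_n) ∈ (0,L]^n: ∑_{i=1}^{n} a_i ∑_{k=1}^{i} g(a_k) b_{ik} + ∑_{i=1}^{n} a_i ∑_{k=i}^{n} g(a_k) b̃_{ik} ≥ c ∑_{i=1}^{n} a_i g(a_i) + (θτ/2) ∑_{1≤i,k≤n} (a_i − a_k)². -/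
open Finset

lemma sum_shift_Ico (p m : ℕ) (f : ℕ → ℝ) :
    ∑ k ∈ Ico p m, f (k+1) = ∑ l ∈ Icc (p+1) m, f l := by
  rw [Finset.sum_Ico_add' f p m 1, Finset.Ico_add_one_right_eq_Icc]

lemma icc_to_fin (n : ℕ) (f : ℕ → ℝ) : ∑ l ∈ Icc 1 n, f l = ∑ i : Fin n, f (i.1+1) := by
  rw [Fin.sum_univ_eq_sum_range (fun i => f (i+1)) n, Finset.range_eq_Ico,
    sum_shift_Ico]

lemma fin_ite_le (n : ℕ) (i : Fin n) (F : ℕ → ℝ) :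
    ∑ k ∈ Icc 1 (i.1+1), F k = ∑ k : Fin n, if (k:ℕ) ≤ (i:ℕ) then F (k.1+1) else 0 := by
  rw [Fin.sum_univ_eq_sum_range (fun k => if k ≤ (i:ℕ) then F (k+1) else 0) n,
    ← Finset.sum_filter]
  rw [show (range n).filter (fun k => k ≤ (i:ℕ)) = Ico 0 (i.1+1) by
    ext x; simp only [mem_filter, mem_range, mem_Ico]; omega]
  rw [sum_shift_Ico]

lemma fin_ite_ge (n : ℕ) (i : Fin n) (F : ℕ → ℝ) :
    ∑ k ∈ Icc (i.1+1) n, F k = ∑ k : Fin n, if (i:ℕ) ≤ (k:ℕ) then F (k.1+1) else 0 := by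
  rw [Fin.sum_univ_eq_sum_range (fun k => if (i:ℕ) ≤ k then F (k+1) else 0) n,
    ← Finset.sum_filter]
  rw [show (range n).filter (fun k => (i:ℕ) ≤ k) = Ico i.1 n by
    ext x; simp only [mem_filter, mem_range, mem_Ico]; omega]
  rw [sum_shift_Ico]

lemma pair_mvt (L θ : ℝ) (g g' : ℝ → ℝ)
    (hgc : ContinuousOn g (Set.Ioc 0 L))
    (hgd : ∀ x ∈ Set.Ioc (0:ℝ) L, HasDerivAt g (g' x) x)
    (hg' : ∀ x ∈ Set.Ioc (0:ℝ) L, g' x ≤ -θ)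
    {x y : ℝ} (hx : x ∈ Set.Ioc (0:ℝ) L) (hy : y ∈ Set.Ioc (0:ℝ) L) :
    θ * (x - y)^2 ≤ -((x - y) * (g x - g y)) := by
  have main : ∀ u v : ℝ, u ∈ Set.Ioc (0:ℝ) L → v ∈ Set.Ioc (0:ℝ) L → u < v →
      θ * (u - v)^2 ≤ -((u - v) * (g u - g v)) := by
    intro u v hu hv huv
    have hsub : Set.Icc u v ⊆ Set.Ioc 0 L := fun t ht =>
      ⟨lt_of_lt_of_le hu.1 ht.1, le_trans ht.2 hv.2⟩
    obtain ⟨ξ, hξ, hξeq⟩ := exists_hasDerivAt_eq_slope g g' huv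
      (hgc.mono hsub)
      (fun t ht => hgd t (hsub ⟨le_of_lt ht.1, le_of_lt ht.2⟩))
    have h1 : g' ξ ≤ -θ := hg' ξ (hsub ⟨le_of_lt hξ.1, le_of_lt hξ.2⟩)
    have hne : v - u ≠ 0 := sub_ne_zero.2 (ne_of_gt huv)
    have h2 : g v - g u = g' ξ * (v - u) := by
      rw [hξeq, div_mul_cancel₀ _ hne]
    nlinarith [sq_nonneg (u - v)]
  rcases lt_trichotomy x y with h | h | h
  · exact main x y hx hy h
  · simp [h]
  · have := main y x hy hx h; nlinarith

lemma birkhoff_rearrange (n : ℕ) (r : ℝ) (hr : 0 < r) (N : Matrix (Fin n) (Fin n) ℝ)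
    (hN0 : ∀ i k, 0 ≤ N i k) (hrowN : ∀ i, ∑ k, N i k = r) (hcolN : ∀ k, ∑ i, N i k = r)
    (v w : Fin n → ℝ) (hvw : Antivary v w) :
    r * ∑ i, v i * w i ≤ ∑ i, ∑ k, v i * w k * N i k := by
  set D : Matrix (Fin n) (Fin n) ℝ := r⁻¹ • N with hDdef
  have hD : D ∈ doublyStochastic ℝ (Fin n) := by
    rw [mem_doublyStochastic_iff_sum]
    refine ⟨fun i j => by
      simp only [hDdef, Matrix.smul_apply, smul_eq_mul]
      exact mul_nonneg (inv_nonneg.2 hr.le) (hN0 i j), fun i => ?_, fun j => ?_⟩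
    · simp only [hDdef, Matrix.smul_apply, smul_eq_mul, ← Finset.mul_sum, hrowN]
      field_simp
    · simp only [hDdef, Matrix.smul_apply, smul_eq_mul, ← Finset.mul_sum, hcolN]
      field_simp
  obtain ⟨wt, hwt0, hwt1, hwtsum⟩ := exists_eq_sum_perm_of_mem_doublyStochastic hD
  have hNeq : ∀ i k, N i k = r * ∑ σ : Equiv.Perm (Fin n), wt σ * σ.permMatrix ℝ i k := by
    intro i k
    have h : (∑ σ : Equiv.Perm (Fin n), wt σ • σ.permMatrix ℝ) i k = D i k := by rw [hwtsum]
    simp only [Matrix.sum_apply, Matrix.smul_apply, smul_eq_mul, hDdef] at h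
    rw [h]
    field_simp
  have hperm : ∀ (σ : Equiv.Perm (Fin n)) (i : Fin n),
      ∑ k, v i * w k * σ.permMatrix ℝ i k = v i * w (σ i) := by
    intro σ i
    have he : ∀ k, v i * w k * σ.permMatrix ℝ i k = if σ i = k then v i * w k else 0 := by
      intro k
      simp only [Equiv.Perm.permMatrix, PEquiv.toMatrix_apply, Equiv.toPEquiv_apply,
        Option.mem_def, Option.some.injEq, mul_ite, mul_one, mul_zero]
    rw [Finset.sum_congr rfl (fun k _ => he k),
      Finset.sum_ite_eq univ (σ i) (fun k => v i * w k)]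
    simp
  have hrow_eq : ∀ i, ∑ k, v i * w k * N i k
      = ∑ σ : Equiv.Perm (Fin n), r * (wt σ * (v i * w (σ i))) := by
    intro i
    calc ∑ k, v i * w k * N i k
        = ∑ k, ∑ σ : Equiv.Perm (Fin n), r * (wt σ * (v i * w k * σ.permMatrix ℝ i k)) := by
          refine Finset.sum_congr rfl fun k _ => ?_
          rw [hNeq i k, Finset.mul_sum, Finset.mul_sum]
          refine Finset.sum_congr rfl fun σ _ => by ring
      _ = ∑ σ : Equiv.Perm (Fin n), ∑ k, r * (wt σ * (v i * w k * σ.permMatrix ℝ i k)) :=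
          Finset.sum_comm
      _ = ∑ σ : Equiv.Perm (Fin n), r * (wt σ * (v i * w (σ i))) := by
          refine Finset.sum_congr rfl fun σ _ => ?_
          rw [← Finset.mul_sum, ← Finset.mul_sum, hperm σ i]
  calc r * ∑ i, v i * w i
      = ∑ σ : Equiv.Perm (Fin n), r * (wt σ * ∑ i, v i * w i) := by
        rw [← Finset.mul_sum, ← Finset.sum_mul, hwt1, one_mul]
    _ ≤ ∑ σ : Equiv.Perm (Fin n), r * (wt σ * ∑ i, v i * w (σ i)) := by
        refine Finset.sum_le_sum fun σ _ => ?_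
        have := hvw.sum_mul_le_sum_mul_comp_perm (σ := σ)
        have h2 : wt σ * ∑ i, v i * w i ≤ wt σ * ∑ i, v i * w (σ i) :=
          mul_le_mul_of_nonneg_left this (hwt0 σ)
        exact mul_le_mul_of_nonneg_left h2 hr.le
    _ = ∑ i, ∑ k, v i * w k * N i k := by
        rw [show (∑ σ : Equiv.Perm (Fin n), r * (wt σ * ∑ i, v i * w (σ i)))
            = ∑ σ : Equiv.Perm (Fin n), ∑ i, r * (wt σ * (v i * w (σ i))) by
          refine Finset.sum_congr rfl fun σ _ => ?_
          rw [Finset.mul_sum, Finset.mul_sum]]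
        rw [Finset.sum_comm]
        exact Finset.sum_congr rfl fun i _ => (hrow_eq i).symm

theorem discrete_key_inequality
    (n : ℕ) (hn : 0 < n) (L θ τ c : ℝ) (hL : 0 < L) (hθ : 0 ≤ θ) (hτ : 0 < τ)
    (b bt : ℕ → ℕ → ℝ)
    (hb : ∀ i k, 1 ≤ k → k ≤ i → i ≤ n → τ ≤ b i k)
    (hbt : ∀ i k, 1 ≤ i → i ≤ k → k ≤ n → τ ≤ bt i k)
    (hrow : ∀ i, 1 ≤ i → i ≤ n →
      (∑ l ∈ Icc 1 i, b i l) + (∑ l ∈ Icc i n, bt i l) = c)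
    (hcol : ∀ k, 1 ≤ k → k ≤ n →
      (∑ l ∈ Icc k n, b l k) + (∑ l ∈ Icc 1 k, bt l k) = c)
    (g g' : ℝ → ℝ)
    (hgc : ContinuousOn g (Set.Ioc 0 L))
    (hgd : ∀ x ∈ Set.Ioc (0:ℝ) L, HasDerivAt g (g' x) x)
    (hg' : ∀ x ∈ Set.Ioc (0:ℝ) L, g' x ≤ -θ)
    (a : ℕ → ℝ) (ha : ∀ i, 1 ≤ i → i ≤ n → a i ∈ Set.Ioc (0:ℝ) L) :
    (∑ i ∈ Icc 1 n, a i * ∑ k ∈ Icc 1 i, g (a k) * b i k) +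
      (∑ i ∈ Icc 1 n, a i * ∑ k ∈ Icc i n, g (a k) * bt i k) ≥
    c * (∑ i ∈ Icc 1 n, a i * g (a i)) +
      θ * τ / 2 * (∑ i ∈ Icc 1 n, ∑ k ∈ Icc 1 n, (a i - a k) ^ 2) := by
  set v : Fin n → ℝ := fun i => a (i.1+1) with hvdef
  set w : Fin n → ℝ := fun i => g (a (i.1+1)) with hwdef
  have hv : ∀ i : Fin n, v i ∈ Set.Ioc (0:ℝ) L := fun i => ha (i.1+1) (by omega) (by omega)
  set M : Fin n → Fin n → ℝ := fun i k =>
    (if (k:ℕ) ≤ (i:ℕ) then b (i.1+1) (k.1+1) else 0) +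
    (if (i:ℕ) ≤ (k:ℕ) then bt (i.1+1) (k.1+1) else 0) with hMdef
  -- row and column sums of M
  have hMrow : ∀ i : Fin n, ∑ k, M i k = c := by
    intro i
    rw [Finset.sum_add_distrib,
      ← fin_ite_le n i (fun k => b (i.1+1) k), ← fin_ite_ge n i (fun k => bt (i.1+1) k)]
    exact hrow (i.1+1) (by omega) (by omega)
  have hMcol : ∀ k : Fin n, ∑ i, M i k = c := by
    intro k
    rw [Finset.sum_add_distrib,
      ← fin_ite_ge n k (fun l => b l (k.1+1)), ← fin_ite_le n k (fun l => bt l (k.1+1))]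
    exact hcol (k.1+1) (by omega) (by omega)
  -- lower bounds on M
  have hb' : ∀ i k : Fin n, (k:ℕ) ≤ (i:ℕ) → τ ≤ b (i.1+1) (k.1+1) :=
    fun i k h => hb _ _ (by omega) (by omega) (by omega)
  have hbt' : ∀ i k : Fin n, (i:ℕ) ≤ (k:ℕ) → τ ≤ bt (i.1+1) (k.1+1) :=
    fun i k h => hbt _ _ (by omega) (by omega) (by omega)
  have hM_lb : ∀ i k : Fin n, τ ≤ M i k := by
    intro i k
    rcases le_total (k:ℕ) (i:ℕ) with h | h
    · have h1 : τ ≤ (if (k:ℕ) ≤ (i:ℕ) then b (i.1+1) (k.1+1) else 0) := by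
        rw [if_pos h]; exact hb' i k h
      have h2 : 0 ≤ (if (i:ℕ) ≤ (k:ℕ) then bt (i.1+1) (k.1+1) else 0) := by
        split_ifs with h2
        · exact le_trans hτ.le (hbt' i k h2)
        · exact le_rfl
      simp only [hMdef]; linarith
    · have h1 : τ ≤ (if (i:ℕ) ≤ (k:ℕ) then bt (i.1+1) (k.1+1) else 0) := by
        rw [if_pos h]; exact hbt' i k h
      have h2 : 0 ≤ (if (k:ℕ) ≤ (i:ℕ) then b (i.1+1) (k.1+1) else 0) := by
        split_ifs with h2
        · exact le_trans hτ.le (hb' i k h2)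
        · exact le_rfl
      simp only [hMdef]; linarith
  have hMdiag : ∀ i : Fin n, 2*τ ≤ M i i := by
    intro i
    have h1 := hb' i i le_rfl
    have h2 := hbt' i i le_rfl
    simp only [hMdef, if_pos le_rfl]; linarith
  -- rewrite goal in terms of v, w, M
  have hLHS : (∑ i ∈ Icc 1 n, a i * ∑ k ∈ Icc 1 i, g (a k) * b i k) +
      (∑ i ∈ Icc 1 n, a i * ∑ k ∈ Icc i n, g (a k) * bt i k)
      = ∑ i : Fin n, ∑ k : Fin n, v i * w k * M i k := by
    rw [icc_to_fin n (fun l => a l * ∑ k ∈ Icc 1 l, g (a k) * b l k),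
      icc_to_fin n (fun l => a l * ∑ k ∈ Icc l n, g (a k) * bt l k),
      ← Finset.sum_add_distrib]
    refine Finset.sum_congr rfl fun i _ => ?_
    rw [fin_ite_le n i (fun k => g (a k) * b (i.1+1) k),
      fin_ite_ge n i (fun k => g (a k) * bt (i.1+1) k),
      Finset.mul_sum, Finset.mul_sum, ← Finset.sum_add_distrib]
    refine Finset.sum_congr rfl fun k _ => ?_
    simp only [hMdef, hvdef, hwdef]
    split_ifs <;> ring
  have hRHS1 : ∑ i ∈ Icc 1 n, a i * g (a i) = ∑ i : Fin n, v i * w i :=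
    icc_to_fin n (fun l => a l * g (a l))
  have hQ : ∑ i ∈ Icc 1 n, ∑ k ∈ Icc 1 n, (a i - a k) ^ 2
      = ∑ i : Fin n, ∑ k : Fin n, (v i - v k) ^ 2 := by
    rw [icc_to_fin n (fun l => ∑ k ∈ Icc 1 n, (a l - a k)^2)]
    exact Finset.sum_congr rfl fun i _ => icc_to_fin n (fun k => (a (i.1+1) - a k)^2)
  rw [hLHS, hRHS1, hQ]
  -- abbreviations
  set S := ∑ i : Fin n, v i * w i with hSdef
  set Q := ∑ i : Fin n, ∑ k : Fin n, (v i - v k)^2 with hQdef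
  set X := ∑ i : Fin n, ∑ k : Fin n, v i * w k with hXdef
  -- pairwise MVT bound
  have hpair : ∀ i k : Fin n, θ * (v i - v k)^2 ≤ -((v i - v k) * (w i - w k)) :=
    fun i k => pair_mvt L θ g g' hgc hgd hg' (hv i) (hv k)
  -- antivariance
  have hvw : Antivary v w := by
    intro i j hlt
    by_contra hcon
    push_neg at hcon
    nlinarith [hpair i j, sq_nonneg (v i - v j)]
  -- split M = N + τ
  set N : Matrix (Fin n) (Fin n) ℝ := fun i k => M i k - τ with hNdef
  have hN0 : ∀ i k : Fin n, 0 ≤ N i k := fun i k => by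
    have := hM_lb i k; simp only [hNdef]; linarith
  set r : ℝ := c - n * τ with hrdef
  have hrowN : ∀ i : Fin n, ∑ k, N i k = r := by
    intro i
    simp only [hNdef]
    rw [Finset.sum_sub_distrib, hMrow, Finset.sum_const, Finset.card_univ,
      Fintype.card_fin, nsmul_eq_mul]
  have hcolN : ∀ k : Fin n, ∑ i, N i k = r := by
    intro k
    simp only [hNdef]
    rw [Finset.sum_sub_distrib, hMcol, Finset.sum_const, Finset.card_univ,
      Fintype.card_fin, nsmul_eq_mul]
  have hr : 0 < r := by
    have i0 : Fin n := ⟨0, hn⟩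
    have hdiag : τ ≤ N i0 i0 := by
      have := hMdiag i0; simp only [hNdef]; linarith
    have hle : N i0 i0 ≤ ∑ k, N i0 k :=
      Finset.single_le_sum (fun k _ => hN0 i0 k) (mem_univ i0)
    rw [hrowN i0] at hle
    linarith
  -- Claim 1 : Birkhoff part
  have claim1 : r * S ≤ ∑ i : Fin n, ∑ k : Fin n, v i * w k * N i k :=
    birkhoff_rearrange n r hr N hN0 hrowN hcolN v w hvw
  -- Claim 2 : τ part
  have e2 : ∑ i : Fin n, ∑ k : Fin n, v i * w i = n * S := by
    calc ∑ i : Fin n, ∑ _k : Fin n, v i * w i = ∑ i : Fin n, (n:ℝ) * (v i * w i) := by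
          refine Finset.sum_congr rfl fun i _ => ?_
          rw [Finset.sum_const, Finset.card_univ, Fintype.card_fin, nsmul_eq_mul]
      _ = n * S := by rw [← Finset.mul_sum]
  have e3 : ∑ i : Fin n, ∑ k : Fin n, v k * w k = n * S := by
    rw [Finset.sum_comm]; exact e2
  have e1 : ∑ i : Fin n, ∑ k : Fin n, v k * w i = X := Finset.sum_comm
  have hsum0 : ∑ i : Fin n, ∑ k : Fin n,
      (θ*(v i - v k)^2 + (v i - v k)*(w i - w k)) ≤ 0 :=
    Finset.sum_nonpos fun i _ => Finset.sum_nonpos fun k _ => by linarith [hpair i k]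
  have hθQ : ∑ i : Fin n, ∑ k : Fin n, θ*(v i - v k)^2 = θ * Q := by
    rw [hQdef, Finset.mul_sum]
    exact Finset.sum_congr rfl fun i _ => (Finset.mul_sum _ _ _).symm
  have hexp : ∑ i : Fin n, ∑ k : Fin n, (θ*(v i - v k)^2 + (v i - v k)*(w i - w k))
      = θ*Q + ((n:ℝ)*S + (n:ℝ)*S) - (X + X) := by
    calc ∑ i : Fin n, ∑ k : Fin n, (θ*(v i - v k)^2 + (v i - v k)*(w i - w k))
        = ∑ i : Fin n, ∑ k : Fin n,
            (θ*(v i - v k)^2 + (v i * w i + v k * w k) - (v i * w k + v k * w i)) :=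
          Finset.sum_congr rfl fun i _ => Finset.sum_congr rfl fun k _ => by ring
      _ = (∑ i : Fin n, ∑ k : Fin n, θ*(v i - v k)^2)
            + ((∑ i : Fin n, ∑ k : Fin n, v i * w i) + (∑ i : Fin n, ∑ k : Fin n, v k * w k))
            - ((∑ i : Fin n, ∑ k : Fin n, v i * w k) + (∑ i : Fin n, ∑ k : Fin n, v k * w i)) := by
          simp only [Finset.sum_add_distrib, Finset.sum_sub_distrib]
      _ = θ*Q + ((n:ℝ)*S + (n:ℝ)*S) - (X + X) := by rw [hθQ, e2, e3, e1]
  have hX : (n:ℝ)*S + θ/2*Q ≤ X := by linarith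
  have claim2 : (n:ℝ)*τ*S + θ*τ/2*Q ≤ τ * X := by
    nlinarith [mul_le_mul_of_nonneg_left hX hτ.le]
  -- assemble
  have hsplitM : ∑ i : Fin n, ∑ k : Fin n, v i * w k * M i k
      = (∑ i : Fin n, ∑ k : Fin n, v i * w k * N i k) + τ * X := by
    rw [hXdef, Finset.mul_sum, ← Finset.sum_add_distrib]
    refine Finset.sum_congr rfl fun i _ => ?_
    rw [Finset.mul_sum, ← Finset.sum_add_distrib]
    refine Finset.sum_congr rfl fun k _ => ?_
    simp only [hNdef]; ring
  have hc : c * S = r * S + (n:ℝ)*τ*S := by rw [hrdef]; ring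
  rw [hsplitM]
  linarith [claim1, claim2]
end

section
/- Let T > 0 and f : [0,T] → ℝ be continuous and positive, with L = max_{[0,T]} f. Let g ∈ C¹((0,L]) with g'(a) ≥ θ for all a ∈ (0,L], where θ ≥ 0. Then e^T ∫_0^T f(x) e^{−x} (∫_0^x g(f(y)) e^y dy) dx + ∫_0^T f(x) e^{−x} (∫_x^T g(f(y)) e^y dy) dx ≤ (e^T − 1) ∫_0^T f(x) g(f(x)) dx − (θ/2) ∫_0^T ∫_0^T |f(x) − f(y)|² dx dy. -/
/-!
Let `k x y = e^(T - x + y)` for `y ≤ x` and `e^(y - x)` otherwise, so that `k x ·` is the density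
of `x + s mod T` under `e^s ds` on `(0, T]`. The left-hand side is `∫∫ f x * k x y * g (f y)`, and
`k ≥ 1` has every row and column integral equal to `e^T - 1`. For a primitive `G` of `g`, the
`θ`-strong convexity of `G` gives `a (g a - g b) ≥ Φ a - Φ b + θ/2 (a - b)²` with
`Φ a = a g a - G a`. Integrating this against `k`, the `Φ`-terms cancel because `k` is doubly
stochastic, and `k ≥ 1` leaves `θ/2 ∫∫ |f x - f y|²`.
-/

open MeasureTheory Set

lemma ContinuousOn.memLp_top_restrict {X E : Type*} [TopologicalSpace X] [MeasurableSpace X]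
    [OpensMeasurableSpace X] [NormedAddCommGroup E] [SecondCountableTopologyEither X E]
    {μ : Measure X} {f : X → E} {K s : Set X}
    (hK : IsCompact K) (hf : ContinuousOn f K) (hsK : s ⊆ K) (hs : MeasurableSet s) :
    MemLp f ⊤ (μ.restrict s) := by
  obtain ⟨C, hC⟩ := hK.exists_bound_of_continuousOn hf
  exact memLp_top_of_bound ((hf.mono hsK).aestronglyMeasurable hs) C
    (ae_restrict_of_forall_mem hs fun x hx => hC x (hsK hx))

lemma ae_mem_prod_restrict {α : Type*} [MeasurableSpace α] {μ : Measure α} [SFinite μ]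
    {s : Set α} (hs : MeasurableSet s) :
    ∀ᵐ z ∂(μ.restrict s).prod (μ.restrict s), z.1 ∈ s ∧ z.2 ∈ s := by
  rw [Measure.prod_restrict]
  exact ae_restrict_mem (hs.prod hs)

section DoublyStochastic

variable {α : Type*} [MeasurableSpace α] {μ : Measure α} [IsFiniteMeasure μ]
  {k : α → α → ℝ} {c : ℝ}

lemma integral_prod_kernel_mul_sub_eq_zero (hk : MemLp (Function.uncurry k) ⊤ (μ.prod μ))
    (hrow : ∀ᵐ x ∂μ, ∫ y, k x y ∂μ = c) (hcol : ∀ᵐ y ∂μ, ∫ x, k x y ∂μ = c) {ψ : α → ℝ}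
    (hψ : MemLp ψ ⊤ μ) :
    ∫ z, k z.1 z.2 * (ψ z.1 - ψ z.2) ∂(μ.prod μ) = 0 := by
  have h1 : Integrable (fun z => k z.1 z.2 * ψ z.1) (μ.prod μ) :=
    ((hψ.comp_fst μ).mul' hk).integrable le_top
  have h2 : Integrable (fun z => k z.1 z.2 * ψ z.2) (μ.prod μ) :=
    ((hψ.comp_snd μ).mul' hk).integrable le_top
  simp_rw [mul_sub]
  rw [integral_sub h1 h2, integral_prod _ h1, integral_prod_symm _ h2, sub_eq_zero]
  simp only [integral_mul_const]
  exact (integral_congr_ae (hrow.mono fun x hx => by rw [hx])).trans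
    (integral_congr_ae (hcol.mono fun y hy => by rw [hy])).symm

lemma integral_prod_kernel_mul_mul_sub (hk : MemLp (Function.uncurry k) ⊤ (μ.prod μ))
    (hrow : ∀ᵐ x ∂μ, ∫ y, k x y ∂μ = c) {u v : α → ℝ} (hu : MemLp u ⊤ μ) (hv : MemLp v ⊤ μ) :
    ∫ z, k z.1 z.2 * (u z.1 * (v z.1 - v z.2)) ∂(μ.prod μ) =
      c * ∫ x, u x * v x ∂μ - ∫ x, u x * ∫ y, k x y * v y ∂μ ∂μ := by
  have hv2 : MemLp (fun z : α × α => v z.2) ⊤ (μ.prod μ) := hv.comp_snd μ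
  have hkv : Integrable (fun z : α × α => k z.1 z.2 * v z.2) (μ.prod μ) :=
    (hv2.mul' hk).integrable le_top
  have hF : Integrable (fun z : α × α => k z.1 z.2 * (u z.1 * (v z.1 - v z.2))) (μ.prod μ) :=
    ((((hv.comp_fst μ).sub hv2).mul' (hu.comp_fst μ) (r := ⊤)).mul' hk).integrable le_top
  have hslice : ∀ᵐ x ∂μ, ∫ y, k x y * (u x * (v x - v y)) ∂μ =
      c * (u x * v x) - u x * ∫ y, k x y * v y ∂μ := by
    filter_upwards [hrow, hk.integrable le_top |>.prod_right_ae, hkv.prod_right_ae]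
      with x hx (hkx : Integrable (k x) μ) hkvx
    have hsplit : (fun y => k x y * (u x * (v x - v y))) =
        fun y => u x * v x * k x y - u x * (k x y * v y) := by
      ext y; ring
    rw [hsplit, integral_sub (hkx.const_mul _) (hkvx.const_mul _), integral_const_mul,
      integral_const_mul, hx, mul_comm]
  rw [integral_prod _ hF, integral_congr_ae hslice, integral_sub, integral_const_mul]
  · exact ((hv.mul' hu).integrable le_top).const_mul c
  · exact hkv.integral_prod_left.mul_of_top_left hu |>.congr (ae_of_all _ fun x => mul_comm _ _)

lemma mul_integral_sq_sub_le (hk : MemLp (Function.uncurry k) ⊤ (μ.prod μ))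
    (hk1 : ∀ᵐ z ∂(μ.prod μ), 1 ≤ k z.1 z.2)
    (hrow : ∀ᵐ x ∂μ, ∫ y, k x y ∂μ = c) (hcol : ∀ᵐ y ∂μ, ∫ x, k x y ∂μ = c)
    {u v ψ : α → ℝ} (hu : MemLp u ⊤ μ) (hv : MemLp v ⊤ μ) (hψ : MemLp ψ ⊤ μ)
    {θ : ℝ} (hθ : 0 ≤ θ)
    (hkey : ∀ᵐ z ∂(μ.prod μ),
      ψ z.1 - ψ z.2 + θ / 2 * (u z.1 - u z.2) ^ 2 ≤ u z.1 * (v z.1 - v z.2)) :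
    θ / 2 * ∫ x, ∫ y, (u x - u y) ^ 2 ∂μ ∂μ ≤
      c * ∫ x, u x * v x ∂μ - ∫ x, u x * ∫ y, k x y * v y ∂μ ∂μ := by
  set F := fun z : α × α => k z.1 z.2 * (u z.1 * (v z.1 - v z.2))
  set E := fun z : α × α => k z.1 z.2 * (ψ z.1 - ψ z.2)
  have hF : Integrable F (μ.prod μ) :=
    ((((hv.comp_fst μ).sub (hv.comp_snd μ)).mul' (hu.comp_fst μ) (r := ⊤)).mul' hk).integrable
      le_top
  have hE : Integrable E (μ.prod μ) :=
    (((hψ.comp_fst μ).sub (hψ.comp_snd μ)).mul' hk).integrable le_top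
  have hQ : Integrable (fun z : α × α => (u z.1 - u z.2) ^ 2) (μ.prod μ) := by
    have hdu := (hu.comp_fst μ).sub (hu.comp_snd μ)
    simpa [sq] using (hdu.mul' hdu).integrable le_top
  have hpt : ∀ᵐ z ∂(μ.prod μ), θ / 2 * (u z.1 - u z.2) ^ 2 ≤ F z - E z := by
    filter_upwards [hk1, hkey] with z hz1 hz
    calc θ / 2 * (u z.1 - u z.2) ^ 2 ≤ k z.1 z.2 * (θ / 2 * (u z.1 - u z.2) ^ 2) :=
          le_mul_of_one_le_left (by positivity) hz1
      _ ≤ k z.1 z.2 * (u z.1 * (v z.1 - v z.2) - (ψ z.1 - ψ z.2)) :=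
          mul_le_mul_of_nonneg_left (by linarith) (by linarith)
      _ = F z - E z := by simp only [F, E]; ring
  calc θ / 2 * ∫ x, ∫ y, (u x - u y) ^ 2 ∂μ ∂μ
      = ∫ z, θ / 2 * (u z.1 - u z.2) ^ 2 ∂(μ.prod μ) := by
        rw [integral_const_mul, integral_prod _ hQ]
    _ ≤ ∫ z, F z - E z ∂(μ.prod μ) := integral_mono_ae (hQ.const_mul _) (hF.sub hE) hpt
    _ = _ := by
        rw [integral_sub hF hE, integral_prod_kernel_mul_sub_eq_zero hk hrow hcol hψ, sub_zero,
          integral_prod_kernel_mul_mul_sub hk hrow hu hv]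

end DoublyStochastic

open Real intervalIntegral

lemma mul_sq_le_integral_sub {g : ℝ → ℝ} {θ a b : ℝ}
    (hg : MonotoneOn (fun t => g t - θ * t) (uIcc a b)) :
    θ / 2 * (a - b) ^ 2 ≤ ∫ t in b..a, (g t - g b) := by
  set h := fun t => g t - θ * t
  have hh : IntervalIntegrable h volume b a := (uIcc_comm a b ▸ hg).intervalIntegrable
  have hsplit : ∫ t in b..a, (g t - g b) = (∫ t in b..a, (h t - h b)) + θ / 2 * (a - b) ^ 2 := by
    have hlin : ∫ t in b..a, θ * (t - b) = θ / 2 * (a - b) ^ 2 := by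
      simp only [intervalIntegral.integral_const_mul, intervalIntegral.integral_sub,
        intervalIntegrable_id, intervalIntegrable_const, integral_id,
        intervalIntegral.integral_const, smul_eq_mul]
      ring
    rw [← hlin, ← integral_add (hh.sub intervalIntegrable_const)
      (intervalIntegrable_const.mul_continuousOn (by fun_prop))]
    congr 1 with t
    simp only [h]; ring
  have hnonneg : 0 ≤ ∫ t in b..a, (h t - h b) := by
    rcases le_total b a with hba | hab
    · refine integral_nonneg hba fun t ht => sub_nonneg.2 ?_
      exact hg right_mem_uIcc (Icc_subset_uIcc' ht) ht.1
    · rw [integral_symm, ← intervalIntegral.integral_neg]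
      refine integral_nonneg hab fun t ht => neg_nonneg.2 (sub_nonpos.2 ?_)
      exact hg (Icc_subset_uIcc ht) right_mem_uIcc ht.2
  linarith

lemma intervalIntegrable_of_monotoneOn_sub_mul {g : ℝ → ℝ} {θ a b : ℝ}
    (hg : MonotoneOn (fun t => g t - θ * t) (uIcc a b)) : IntervalIntegrable g volume a b := by
  have := hg.intervalIntegrable.add (intervalIntegrable_const.mul_continuousOn
    (continuousOn_id (s := uIcc a b)) : IntervalIntegrable (fun t => θ * t) volume a b)
  simpa using this

lemma sub_add_mul_sq_le_mul_sub {g : ℝ → ℝ} {θ p a b : ℝ} {S : Set ℝ} (hS : S.OrdConnected)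
    (hg : MonotoneOn (fun t => g t - θ * t) S) (hp : p ∈ S) (ha : a ∈ S) (hb : b ∈ S) :
    (a * g a - ∫ t in p..a, g t) - (b * g b - ∫ t in p..b, g t) + θ / 2 * (a - b) ^ 2 ≤
      a * (g a - g b) := by
  have hint : ∀ x ∈ S, ∀ y ∈ S, IntervalIntegrable g volume x y := fun x hx y hy =>
    intervalIntegrable_of_monotoneOn_sub_mul (hg.mono (hS.uIcc_subset hx hy))
  have hprim : (∫ t in p..a, g t) - ∫ t in p..b, g t = ∫ t in b..a, g t :=
    integral_interval_sub_left (hint p hp a ha) (hint p hp b hb)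
  have hbreg : ∫ t in b..a, (g t - g b) = (∫ t in b..a, g t) - (a - b) * g b := by
    simp [integral_sub (hint b hb a ha) intervalIntegrable_const]
  have := mul_sq_le_integral_sub (hg.mono (hS.uIcc_subset ha hb))
  linarith

lemma monotoneOn_sub_mul_of_le_hasDerivAt {g g' : ℝ → ℝ} {θ : ℝ} {D : Set ℝ} (hD : Convex ℝ D)
    (hgd : ∀ a ∈ D, HasDerivAt g (g' a) a) (hg' : ∀ a ∈ D, θ ≤ g' a) :
    MonotoneOn (fun t => g t - θ * t) D := by
  have hd : ∀ a ∈ D, HasDerivAt (fun t => g t - θ * t) (g' a - θ) a := fun a ha =>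
    (hgd a ha).sub (by simpa using (hasDerivAt_id a).const_mul θ)
  exact monotoneOn_of_hasDerivWithinAt_nonneg hD
    (fun a ha => (hd a ha).continuousAt.continuousWithinAt)
    (fun a ha => (hd a (interior_subset ha)).hasDerivWithinAt)
    (fun a ha => sub_nonneg.2 (hg' a (interior_subset ha)))

noncomputable def cyclicKernel (T x y : ℝ) : ℝ :=
  if y ≤ x then exp (T - x + y) else exp (y - x)

lemma cyclicKernel_sub_sub (T x y : ℝ) : cyclicKernel T (T - y) (T - x) = cyclicKernel T x y := by
  simp only [cyclicKernel, sub_le_sub_iff_left]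
  congr 2 <;> ring

lemma measurable_cyclicKernel (T : ℝ) : Measurable (Function.uncurry (cyclicKernel T)) :=
  Measurable.ite (measurableSet_le measurable_snd measurable_fst) (by fun_prop) (by fun_prop)

lemma cyclicKernel_mem_Icc {T x y : ℝ} (hx : x ∈ Icc 0 T) (hy : y ∈ Icc 0 T) :
    cyclicKernel T x y ∈ Icc 1 (exp T) := by
  unfold cyclicKernel
  split_ifs with hyx
  · exact ⟨one_le_exp (by linarith [hx.2, hy.1]), exp_le_exp.2 (by linarith)⟩
  · exact ⟨one_le_exp (by linarith), exp_le_exp.2 (by linarith [hx.1, hy.2])⟩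

lemma setIntegral_cyclicKernel_mul {T x : ℝ} (hx : x ∈ Icc 0 T) {v : ℝ → ℝ}
    (hv : ContinuousOn v (Icc 0 T)) :
    ∫ y in Ioc 0 T, cyclicKernel T x y * v y =
      exp (T - x) * (∫ y in 0..x, v y * exp y) + exp (-x) * ∫ y in x..T, v y * exp y := by
  have hleft : EqOn (fun y => cyclicKernel T x y * v y) (fun y => exp (T - x) * (v y * exp y))
      (Ioc 0 x) := fun y hy => by
    simp only [cyclicKernel, if_pos hy.2, exp_add]; ring
  have hright : EqOn (fun y => cyclicKernel T x y * v y) (fun y => exp (-x) * (v y * exp y))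
      (Ioc x T) := fun y hy => by
    simp only [cyclicKernel, if_neg (not_le.2 hy.1), sub_eq_add_neg y, exp_add]; ring
  have hint : IntegrableOn (fun y => v y * exp y) (Icc 0 T) :=
    (hv.mul (by fun_prop)).integrableOn_Icc
  rw [← Ioc_union_Ioc_eq_Ioc hx.1 hx.2,
    setIntegral_union (Ioc_disjoint_Ioc_of_le le_rfl) measurableSet_Ioc
      ((integrableOn_congr_fun hleft measurableSet_Ioc).2
        ((hint.mono_set (Ioc_subset_Icc_self.trans (Icc_subset_Icc le_rfl hx.2))).const_mul _))
      ((integrableOn_congr_fun hright measurableSet_Ioc).2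
        ((hint.mono_set (Ioc_subset_Icc_self.trans (Icc_subset_Icc hx.1 le_rfl))).const_mul _)),
    setIntegral_congr_fun measurableSet_Ioc hleft, setIntegral_congr_fun measurableSet_Ioc hright,
    MeasureTheory.integral_const_mul, MeasureTheory.integral_const_mul, integral_of_le hx.1,
    integral_of_le hx.2]

lemma setIntegral_cyclicKernel_right {T x : ℝ} (hx : x ∈ Icc 0 T) :
    ∫ y in Ioc 0 T, cyclicKernel T x y = exp T - 1 := by
  have := setIntegral_cyclicKernel_mul hx (v := fun _ => 1) continuousOn_const
  simp only [mul_one, one_mul, integral_exp, exp_zero] at this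
  rw [this, exp_sub, exp_neg]
  field_simp
  ring

lemma setIntegral_cyclicKernel_left {T y : ℝ} (hy : y ∈ Icc 0 T) :
    ∫ x in Ioc 0 T, cyclicKernel T x y = exp T - 1 := by
  rw [← integral_of_le (hy.1.trans hy.2)]
  simp_rw [← cyclicKernel_sub_sub T _ y]
  rw [integral_comp_sub_left (fun x => cyclicKernel T (T - y) x), sub_self, sub_zero,
    integral_of_le (hy.1.trans hy.2)]
  exact setIntegral_cyclicKernel_right ⟨by linarith [hy.2], by linarith [hy.1]⟩

lemma ae_cyclicKernel_mem_Icc (T : ℝ) :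
    ∀ᵐ z ∂(volume.restrict (Ioc 0 T)).prod (volume.restrict (Ioc 0 T)),
      cyclicKernel T z.1 z.2 ∈ Icc 1 (exp T) :=
  (ae_mem_prod_restrict measurableSet_Ioc).mono fun _ hz =>
    cyclicKernel_mem_Icc (Ioc_subset_Icc_self hz.1) (Ioc_subset_Icc_self hz.2)

lemma memLp_top_cyclicKernel (T : ℝ) :
    MemLp (Function.uncurry (cyclicKernel T)) ⊤
      ((volume.restrict (Ioc 0 T)).prod (volume.restrict (Ioc 0 T))) :=
  memLp_top_of_bound (measurable_cyclicKernel T).aestronglyMeasurable (exp T)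
    ((ae_cyclicKernel_mem_Icc T).mono fun z hz => by
      change ‖cyclicKernel T z.1 z.2‖ ≤ exp T
      rw [Real.norm_of_nonneg (zero_le_one.trans hz.1)]
      exact hz.2)

lemma setIntegral_mul_setIntegral_cyclicKernel {T : ℝ} (hT : 0 ≤ T) {u v : ℝ → ℝ}
    (hu : ContinuousOn u (Icc 0 T)) (hv : ContinuousOn v (Icc 0 T)) :
    ∫ x in Ioc 0 T, u x * ∫ y in Ioc 0 T, cyclicKernel T x y * v y =
      exp T * (∫ x in 0..T, u x * exp (-x) * ∫ y in 0..x, v y * exp y) +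
        ∫ x in 0..T, u x * exp (-x) * ∫ y in x..T, v y * exp y := by
  have hve : IntegrableOn (fun y => v y * exp y) (uIcc 0 T) := by
    rw [uIcc_of_le hT]
    exact (hv.mul (by fun_prop)).integrableOn_Icc
  have hlow : ContinuousOn (fun x => u x * exp (-x) * ∫ y in 0..x, v y * exp y) (Icc 0 T) :=
    (hu.mul (by fun_prop)).mul (uIcc_of_le hT ▸ continuousOn_primitive_interval hve)
  have hupp : ContinuousOn (fun x => u x * exp (-x) * ∫ y in x..T, v y * exp y) (Icc 0 T) :=
    (hu.mul (by fun_prop)).mul (uIcc_of_le hT ▸ continuousOn_primitive_interval_left hve)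
  rw [← intervalIntegral.integral_const_mul, ← intervalIntegral.integral_add
    ((hlow.intervalIntegrable_of_Icc hT).const_mul _) (hupp.intervalIntegrable_of_Icc hT),
    integral_of_le hT]
  refine setIntegral_congr_fun measurableSet_Ioc fun x hx => ?_
  rw [setIntegral_cyclicKernel_mul (Ioc_subset_Icc_self hx) hv, exp_sub, exp_neg]
  ring

theorem continuous_key_inequality_increasing_general
    (T : ℝ) (hT : 0 < T) (f : ℝ → ℝ)
    (hf : ContinuousOn f (Set.Icc 0 T))
    (hfpos : ∀ x ∈ Set.Icc (0:ℝ) T, 0 < f x)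
    (L : ℝ) (hL : IsGreatest (f '' Set.Icc 0 T) L)
    (θ : ℝ) (hθ : 0 ≤ θ)
    (g g' : ℝ → ℝ)
    (hgd : ∀ a ∈ Set.Ioc (0:ℝ) L, HasDerivAt g (g' a) a)
    (hg' : ∀ a ∈ Set.Ioc (0:ℝ) L, θ ≤ g' a) :
    Real.exp T * (∫ x in (0:ℝ)..T, f x * Real.exp (-x) *
        ∫ y in (0:ℝ)..x, g (f y) * Real.exp y) +
      (∫ x in (0:ℝ)..T, f x * Real.exp (-x) *
        ∫ y in x..T, g (f y) * Real.exp y) ≤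
    (Real.exp T - 1) * (∫ x in (0:ℝ)..T, f x * g (f x)) -
      θ / 2 * (∫ x in (0:ℝ)..T, ∫ y in (0:ℝ)..T, |f x - f y| ^ 2) := by
  obtain ⟨x₀, hx₀, hmin⟩ := isCompact_Icc.exists_isMinOn (nonempty_Icc.2 hT.le) hf
  have hfmaps : MapsTo f (Icc 0 T) (Icc (f x₀) L) :=
    fun x hx => ⟨hmin hx, hL.2 (mem_image_of_mem f hx)⟩
  have hrange : Icc (f x₀) L ⊆ Ioc 0 L := fun a ha => ⟨(hfpos x₀ hx₀).trans_le ha.1, ha.2⟩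
  have hLmem : L ∈ Icc (f x₀) L := ⟨(hfmaps hx₀).2, le_rfl⟩
  have hmono := monotoneOn_sub_mul_of_le_hasDerivAt (convex_Ioc 0 L) hgd hg'
  have hgc : ContinuousOn g (Icc (f x₀) L) :=
    fun a ha => (hgd a (hrange ha)).continuousAt.continuousWithinAt
  have hΦ : ContinuousOn (fun a => a * g a - ∫ t in L..a, g t) (Icc (f x₀) L) :=
    (continuousOn_id.mul hgc).sub (uIcc_of_le (hfmaps hx₀).2 ▸
      continuousOn_primitive_interval' (hgc.intervalIntegrable_of_Icc (hfmaps hx₀).2)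
        (uIcc_of_le (hfmaps hx₀).2 ▸ hLmem))
  have hgf : ContinuousOn (fun x => g (f x)) (Icc 0 T) := hgc.comp hf hfmaps
  have hμ {h : ℝ → ℝ} (hh : ContinuousOn h (Icc 0 T)) : MemLp h ⊤ (volume.restrict (Ioc 0 T)) :=
    hh.memLp_top_restrict isCompact_Icc Ioc_subset_Icc_self measurableSet_Ioc
  have key := mul_integral_sq_sub_le (memLp_top_cyclicKernel T)
    ((ae_cyclicKernel_mem_Icc T).mono fun _ hz => hz.1)
    (ae_restrict_of_forall_mem measurableSet_Ioc fun x hx =>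
      setIntegral_cyclicKernel_right (Ioc_subset_Icc_self hx))
    (ae_restrict_of_forall_mem measurableSet_Ioc fun y hy =>
      setIntegral_cyclicKernel_left (Ioc_subset_Icc_self hy))
    (hμ hf) (hμ hgf) (hμ (hΦ.comp hf hfmaps)) hθ
    ((ae_mem_prod_restrict measurableSet_Ioc).mono fun z hz =>
      sub_add_mul_sq_le_mul_sub ordConnected_Ioc hmono (hrange hLmem)
        (hrange (hfmaps (Ioc_subset_Icc_self hz.1))) (hrange (hfmaps (Ioc_subset_Icc_self hz.2))))
  rw [setIntegral_mul_setIntegral_cyclicKernel hT.le hf hgf] at key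
  simp only [sq_abs, integral_of_le hT.le] at key ⊢
  linarith

theorem continuous_key_inequality_increasing
    (T : ℝ) (hT : 0 < T) (f : ℝ → ℝ)
    (hf : ContinuousOn f (Set.Icc 0 T))
    (hfpos : ∀ x ∈ Set.Icc (0:ℝ) T, 0 < f x)
    (L : ℝ) (hL : IsGreatest (f '' Set.Icc 0 T) L)
    (θ : ℝ) (hθ : 0 ≤ θ)
    (g g' : ℝ → ℝ)
    (hgd : ∀ a ∈ Set.Ioc (0:ℝ) L, HasDerivAt g (g' a) a)
    (hg'c : ContinuousOn g' (Set.Ioc 0 L))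
    (hg' : ∀ a ∈ Set.Ioc (0:ℝ) L, θ ≤ g' a) :
    Real.exp T * (∫ x in (0:ℝ)..T, f x * Real.exp (-x) *
        ∫ y in (0:ℝ)..x, g (f y) * Real.exp y) +
      (∫ x in (0:ℝ)..T, f x * Real.exp (-x) *
        ∫ y in x..T, g (f y) * Real.exp y) ≤
    (Real.exp T - 1) * (∫ x in (0:ℝ)..T, f x * g (f x)) -
      θ / 2 * (∫ x in (0:ℝ)..T, ∫ y in (0:ℝ)..T, |f x - f y| ^ 2) :=
  continuous_key_inequality_increasing_general T hT f hf hfpos L hL θ hθ g g' hgd hg'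
end

section
/- Let φ : ℝ → ℝ be a non-constant C¹ 1-periodic function and define h(x) = ∫_0^x φ(y)√(1+φ(y)²) dy, A(φ) = e^{h(1)} ∫_0^1 arctan(φ(x)) e^{−h(x)} φ(x)√(1+φ(x)²) (∫_0^x (1+φ(y)²) e^{h(y)} dy) dx, B(φ) = ∫_0^1 arctan(φ(x)) e^{−h(x)} φ(x)√(1+φ(x)²) (∫_x^1 (1+φ(y)²) e^{h(y)} dy) dx, and C(φ) = (e^{h(1)} − 1) ∫_0^1 arctan(φ(x)) (1+φ(x)²) dx. Then, with φ₊ = max{φ,0} and h⁻(x) = ∫_0^x φ₋√(1+φ₋²) dy (φ₋ = min{φ,0}), one has A(φ) + B(φ) − C(φ) ≥ e^{h⁻(1)} (A(φ₊) + B(φ₊) − C(φ₊)). -/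
/-- Antiderivative `h(x) = ∫_0^x φ √(1+φ²)`. -/
noncomputable def hInt (φ : ℝ → ℝ) (x : ℝ) : ℝ :=
  ∫ y in (0:ℝ)..x, φ y * Real.sqrt (1 + φ y ^ 2)

noncomputable def Afun (φ : ℝ → ℝ) : ℝ :=
  Real.exp (hInt φ 1) *
    ∫ x in (0:ℝ)..1, Real.arctan (φ x) * Real.exp (-(hInt φ x)) * φ x *
      Real.sqrt (1 + φ x ^ 2) *
      ∫ y in (0:ℝ)..x, (1 + φ y ^ 2) * Real.exp (hInt φ y)

noncomputable def Bfun (φ : ℝ → ℝ) : ℝ :=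
  ∫ x in (0:ℝ)..1, Real.arctan (φ x) * Real.exp (-(hInt φ x)) * φ x *
    Real.sqrt (1 + φ x ^ 2) *
    ∫ y in x..1, (1 + φ y ^ 2) * Real.exp (hInt φ y)

noncomputable def Cfun (φ : ℝ → ℝ) : ℝ :=
  (Real.exp (hInt φ 1) - 1) *
    ∫ x in (0:ℝ)..1, Real.arctan (φ x) * (1 + φ x ^ 2)

/-!
Let `F = innerFactor φ`, so that `A + B = ∫₀¹ arctan φ · φ √(1 + φ²) · F`. Differentiating,
`F' = (e^{h(1)} - 1)(1 + φ²) - φ √(1 + φ²) F`, hence `A + B - C = -∫₀¹ arctan φ · F'`.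

Split `h = h⁺ + h⁻`, where `h⁻` is nonincreasing and nonpositive on `[0, 1]`. Comparing exponents
under the integrals gives `e^{h⁻(1)} F_{φ₊} ≤ F_φ` on `[0, 1]`, hence `F'_φ ≤ e^{h⁻(1)} F'_{φ₊}`
where `φ ≥ 0`. As `arctan φ = arctan φ₊ + arctan φ₋`, the difference of the two sides is at least
`∫₀¹ q F'_φ` with `q = -arctan φ₋ ≥ 0`.

That integral is nonnegative although `F'` changes sign. Since `F(0) = F(1)`, `∫₀¹ W(F) F' = 0`
for every continuous `W`. Moreover `q = m(s)` and `F' = F (1 + φ²) (s - r)`, where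
`m = max (arcsin ·) 0`, `s = -φ / √(1 + φ²)` and `r = (1 - e^{h(1)}) / F`. So for
`W(y) = m((1 - e^{h(1)}) / y)` the integrand `(q - W(F)) F' = F (1 + φ²) (m s - m r) (s - r)` is
nonnegative because `m` is monotone.
-/

namespace LemmaSign

open Real Set intervalIntegral

theorem integral_mul_deriv_nonneg_of_sign {F F' q W : ℝ → ℝ} {a b : ℝ} (hab : a ≤ b)
    (hF : ∀ x ∈ Icc a b, HasDerivAt F (F' x) x) (hF' : ContinuousOn F' (Icc a b))
    (hq : ContinuousOn q (Icc a b)) (hW : ContinuousOn W (F '' Icc a b)) (hFab : F a = F b)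
    (hsign : ∀ x ∈ Icc a b, 0 ≤ (q x - W (F x)) * F' x) :
    0 ≤ ∫ x in a..b, q x * F' x := by
  rw [← uIcc_of_le hab] at hF hF' hq hW
  have hWF : ContinuousOn (W ∘ F) (uIcc a b) :=
    hW.comp (HasDerivAt.continuousOn hF) (mapsTo_image _ _)
  have hzero : ∫ x in a..b, W (F x) * F' x = 0 :=
    (integral_comp_mul_deriv' hF hF' hW).trans (by rw [hFab, integral_same])
  have hsum := integral_add (μ := MeasureTheory.volume)
    ((hq.sub hWF).mul hF').intervalIntegrable (hWF.mul hF').intervalIntegrable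
  simp only [Pi.mul_apply, Pi.sub_apply, Function.comp_apply, ← add_mul, sub_add_cancel] at hsum
  rw [hsum, hzero, add_zero]
  exact integral_nonneg hab hsign

theorem neg_arctan_min_zero_eq_max_arcsin (t : ℝ) :
    -arctan (min t 0) = max (arcsin (-t / √(1 + t ^ 2))) 0 := by
  rcases le_total t 0 with ht | ht
  · have h : -arctan t = arcsin (-t / √(1 + t ^ 2)) := by
      rw [← arctan_neg, arctan_eq_arcsin, neg_sq]
    rw [min_eq_left ht, h, max_eq_left (arcsin_nonneg.2
      (div_nonneg (neg_nonneg.2 ht) (sqrt_nonneg _)))]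
  · rw [min_eq_right ht, arctan_zero, neg_zero, max_eq_right (arcsin_nonpos.2
      (div_nonpos_of_nonpos_of_nonneg (neg_nonpos.2 ht) (sqrt_nonneg _)))]

variable {φ : ℝ → ℝ}

theorem hasDerivAt_hInt (hφ : Continuous φ) (x : ℝ) :
    HasDerivAt (hInt φ) (φ x * √(1 + φ x ^ 2)) x :=
  ((by fun_prop : Continuous fun y => φ y * √(1 + φ y ^ 2)).integral_hasStrictDerivAt 0 x
    ).hasDerivAt

theorem continuous_hInt (hφ : Continuous φ) : Continuous (hInt φ) :=
  continuous_iff_continuousAt.2 fun x => (hasDerivAt_hInt hφ x).continuousAt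

@[simp]
theorem hInt_zero : hInt φ 0 = 0 := integral_same

noncomputable def weight (φ : ℝ → ℝ) (y : ℝ) : ℝ := (1 + φ y ^ 2) * exp (hInt φ y)

theorem continuous_weight (hφ : Continuous φ) : Continuous (weight φ) := by
  have := continuous_hInt hφ
  unfold weight
  fun_prop

theorem weight_pos (y : ℝ) : 0 < weight φ y := by
  unfold weight
  positivity

noncomputable def innerFactor (φ : ℝ → ℝ) (x : ℝ) : ℝ :=
  exp (hInt φ 1 - hInt φ x) * (∫ y in 0..x, weight φ y) +
    exp (-hInt φ x) * ∫ y in x..1, weight φ y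

noncomputable def innerFactorDeriv (φ : ℝ → ℝ) (x : ℝ) : ℝ :=
  (exp (hInt φ 1) - 1) * (1 + φ x ^ 2) - φ x * √(1 + φ x ^ 2) * innerFactor φ x

theorem hasDerivAt_innerFactor (hφ : Continuous φ) (x : ℝ) :
    HasDerivAt (innerFactor φ) (innerFactorDeriv φ x) x := by
  have hw := continuous_weight hφ
  have hJ (t : ℝ) : HasDerivAt (fun u => ∫ y in 0..u, weight φ y) (weight φ t) t :=
    (hw.integral_hasStrictDerivAt 0 t).hasDerivAt
  have hF : innerFactor φ = fun u => exp (hInt φ 1 - hInt φ u) * (∫ y in 0..u, weight φ y) +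
      exp (-hInt φ u) * ((∫ y in 0..1, weight φ y) - ∫ y in 0..u, weight φ y) := by
    funext u
    rw [innerFactor, integral_interval_sub_left (hw.intervalIntegrable _ _)
      (hw.intervalIntegrable _ _)]
  have hh := hasDerivAt_hInt hφ x
  rw [hF]
  refine (((hh.const_sub (hInt φ 1)).exp.fun_mul (hJ x)).fun_add
    (hh.neg.exp.fun_mul ((hJ x).const_sub (∫ y in 0..1, weight φ y)))).congr_deriv ?_
  simp only [innerFactorDeriv, hF, weight, Pi.neg_apply, exp_sub, exp_neg]
  field_simp
  ring

theorem continuous_innerFactor (hφ : Continuous φ) : Continuous (innerFactor φ) :=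
  continuous_iff_continuousAt.2 fun x => (hasDerivAt_innerFactor hφ x).continuousAt

theorem continuous_innerFactorDeriv (hφ : Continuous φ) : Continuous (innerFactorDeriv φ) := by
  have := continuous_innerFactor hφ
  unfold innerFactorDeriv
  fun_prop

theorem innerFactor_pos (hφ : Continuous φ) {x : ℝ} (hx : x ∈ Icc (0 : ℝ) 1) :
    0 < innerFactor φ x := by
  have hw := continuous_weight hφ
  have hI {a b : ℝ} (hab : a ≤ b) : 0 ≤ ∫ y in a..b, weight φ y :=
    integral_nonneg hab fun y _ => (weight_pos y).le
  rcases hx.2.lt_or_eq with hx1 | rfl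
  · exact add_pos_of_nonneg_of_pos (mul_nonneg (exp_pos _).le (hI hx.1)) (mul_pos (exp_pos _)
      (intervalIntegral_pos_of_pos (hw.intervalIntegrable x 1) weight_pos hx1))
  · exact add_pos_of_pos_of_nonneg (mul_pos (exp_pos _)
      (intervalIntegral_pos_of_pos (hw.intervalIntegrable 0 1) weight_pos one_pos))
      (mul_nonneg (exp_pos _).le (hI le_rfl))

theorem innerFactor_zero_eq_one : innerFactor φ 0 = innerFactor φ 1 := by
  simp [innerFactor]

theorem add_sub_eq_integral (hφ : Continuous φ) :
    Afun φ + Bfun φ - Cfun φ = ∫ x in 0..1, -arctan (φ x) * innerFactorDeriv φ x := by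
  have hw := continuous_weight hφ
  have hh := continuous_hInt hφ
  have hJ : Continuous fun x => ∫ y in 0..x, weight φ y :=
    continuous_primitive (fun a b => hw.intervalIntegrable a b) 0
  have hJ' : Continuous fun x => ∫ y in x..1, weight φ y :=
    (continuous_const.sub hJ).congr fun x =>
      integral_interval_sub_left (hw.intervalIntegrable 0 1) (hw.intervalIntegrable 0 x)
  rw [Afun, Bfun, Cfun, ← integral_const_mul, ← integral_const_mul, ← integral_add,
    ← integral_sub]
  · refine integral_congr fun x _ => ?_
    simp only [innerFactorDeriv, innerFactor, weight, exp_sub, exp_neg]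
    ring
  all_goals
    apply Continuous.intervalIntegrable
    unfold weight at hJ hJ'
    fun_prop

theorem hInt_eq_add (hφ : Continuous φ) (t : ℝ) :
    hInt φ t = hInt (fun x => max (φ x) 0) t + hInt (fun x => min (φ x) 0) t := by
  rw [hInt, hInt, hInt, ← integral_add (by apply Continuous.intervalIntegrable; fun_prop)
    (by apply Continuous.intervalIntegrable; fun_prop)]
  refine integral_congr fun y _ => ?_
  rcases le_total (φ y) 0 with h | h <;> simp [h]

theorem antitone_hInt_min (hφ : Continuous φ) : Antitone (hInt fun x => min (φ x) 0) :=
  antitone_of_hasDerivAt_nonpos (hasDerivAt_hInt (by fun_prop)) fun _ =>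
    mul_nonpos_of_nonpos_of_nonneg (min_le_right _ _) (sqrt_nonneg _)

theorem exp_mul_integral_weight_le {ψ : ℝ → ℝ} (hψ : Continuous ψ) (hφ : Continuous φ)
    (hsq : ∀ y, ψ y ^ 2 ≤ φ y ^ 2) {a b α β : ℝ} (hab : a ≤ b)
    (hexp : ∀ y ∈ Icc a b, α + hInt ψ y ≤ β + hInt φ y) :
    exp α * ∫ y in a..b, weight ψ y ≤ exp β * ∫ y in a..b, weight φ y := by
  rw [← integral_const_mul, ← integral_const_mul]
  refine integral_mono_on hab (((continuous_weight hψ).const_mul _).intervalIntegrable _ _)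
    (((continuous_weight hφ).const_mul _).intervalIntegrable _ _) fun y hy => ?_
  rw [weight, weight, mul_left_comm, ← exp_add, mul_left_comm (exp β), ← exp_add]
  gcongr ?_ * exp ?_
  · linarith [hsq y]
  · exact hexp y hy

theorem exp_hInt_min_mul_innerFactor_le (hφ : Continuous φ) {x : ℝ}
    (hx : x ∈ Icc (0 : ℝ) 1) :
    exp (hInt (fun y => min (φ y) 0) 1) * innerFactor (fun y => max (φ y) 0) x ≤
      innerFactor φ x := by
  have hsplit := hInt_eq_add hφ
  have hanti := antitone_hInt_min hφ
  have hsq (y : ℝ) : max (φ y) 0 ^ 2 ≤ φ y ^ 2 := by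
    rcases le_total (φ y) 0 with h | h <;> simp [h, sq_nonneg]
  rw [innerFactor, innerFactor, mul_add, ← mul_assoc, ← mul_assoc, ← exp_add, ← exp_add]
  refine add_le_add (exp_mul_integral_weight_le (by fun_prop) hφ hsq hx.1 fun y hy => ?_)
    (exp_mul_integral_weight_le (by fun_prop) hφ hsq hx.2 fun y hy => ?_)
  · rw [hsplit 1, hsplit x, hsplit y]
    linarith [hanti hy.2]
  · rw [hsplit x, hsplit y]
    linarith [hanti hy.2, hanti hx.1, hInt_zero (φ := fun y => min (φ y) 0)]

theorem innerFactorDeriv_le (hφ : Continuous φ) {x : ℝ} (hx : x ∈ Icc (0 : ℝ) 1)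
    (hφx : 0 ≤ φ x) :
    innerFactorDeriv φ x ≤
      exp (hInt (fun y => min (φ y) 0) 1) * innerFactorDeriv (fun y => max (φ y) 0) x := by
  have hF := exp_hInt_min_mul_innerFactor_le hφ hx
  have hexp : exp (hInt (fun y => min (φ y) 0) 1) ≤ 1 :=
    exp_le_one_iff.2 ((antitone_hInt_min hφ zero_le_one).trans hInt_zero.le)
  have hw : 0 ≤ φ x * √(1 + φ x ^ 2) := by positivity
  rw [innerFactorDeriv, innerFactorDeriv, max_eq_left hφx, hInt_eq_add hφ 1, exp_add]
  linarith [mul_le_mul_of_nonneg_left hF hw,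
    mul_nonneg (sub_nonneg.2 hexp) (by positivity : (0 : ℝ) ≤ 1 + φ x ^ 2)]

theorem innerFactorDeriv_eq_mul_sub {x : ℝ} (hF : innerFactor φ x ≠ 0) :
    innerFactorDeriv φ x = innerFactor φ x * (1 + φ x ^ 2) *
      (-φ x / √(1 + φ x ^ 2) - (1 - exp (hInt φ 1)) / innerFactor φ x) := by
  have hs : √(1 + φ x ^ 2) ^ 2 = 1 + φ x ^ 2 := sq_sqrt (by positivity)
  have hs0 : √(1 + φ x ^ 2) ≠ 0 := by positivity
  rw [innerFactorDeriv]
  field_simp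
  linear_combination (-(φ x * innerFactor φ x)) * hs

theorem integral_neg_arctan_min_mul_innerFactorDeriv_nonneg (hφ : Continuous φ) :
    0 ≤ ∫ x in 0..1, -arctan (min (φ x) 0) * innerFactorDeriv φ x := by
  have hpos (x : ℝ) (hx : x ∈ Icc (0 : ℝ) 1) := innerFactor_pos hφ hx
  have hm : Monotone fun t => max (arcsin t) 0 := fun _ _ hst =>
    max_le_max_right 0 (monotone_arcsin hst)
  refine integral_mul_deriv_nonneg_of_sign zero_le_one
    (W := fun y => max (arcsin ((1 - exp (hInt φ 1)) / y)) 0)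
    (fun x _ => hasDerivAt_innerFactor hφ x) (continuous_innerFactorDeriv hφ).continuousOn
    (by fun_prop) ?_ innerFactor_zero_eq_one fun x hx => ?_
  · rintro _ ⟨x, hx, rfl⟩
    exact ContinuousAt.continuousWithinAt (by fun_prop (disch := exact (hpos x hx).ne'))
  · rw [neg_arctan_min_zero_eq_max_arcsin, innerFactorDeriv_eq_mul_sub (hpos x hx).ne',
      mul_left_comm]
    have := hpos x hx
    exact mul_nonneg (by positivity) ((hm.monovary monotone_id).sub_mul_sub_nonneg _ _)

theorem neg_arctan_min_mul_innerFactorDeriv_le (hφ : Continuous φ) {x : ℝ}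
    (hx : x ∈ Icc (0 : ℝ) 1) :
    -arctan (min (φ x) 0) * innerFactorDeriv φ x ≤
      -arctan (φ x) * innerFactorDeriv φ x -
        exp (hInt (fun y => min (φ y) 0) 1) *
          (-arctan (max (φ x) 0) * innerFactorDeriv (fun y => max (φ y) 0) x) := by
  rcases le_total (φ x) 0 with h | h
  · simp [h]
  · have hle := innerFactorDeriv_le hφ hx h
    rw [min_eq_right h, max_eq_left h, arctan_zero]
    linarith [mul_nonneg (arctan_nonneg.2 h) (sub_nonneg.2 hle)]

end LemmaSign

open LemmaSign intervalIntegral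

theorem lemma_sign_general
    (φ : ℝ → ℝ) (hφ : ContDiff ℝ 1 φ) :
    Afun φ + Bfun φ - Cfun φ ≥
      Real.exp (hInt (fun x => min (φ x) 0) 1) *
        (Afun (fun x => max (φ x) 0) + Bfun (fun x => max (φ x) 0) -
          Cfun (fun x => max (φ x) 0)) := by
  have hφc := hφ.continuous
  have hψc : Continuous fun x => max (φ x) 0 := by fun_prop
  have hdφ := continuous_innerFactorDeriv hφc
  have hdψ := continuous_innerFactorDeriv hψc
  rw [ge_iff_le, ← sub_nonneg, add_sub_eq_integral hφc, add_sub_eq_integral hψc,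
    ← integral_const_mul, ← integral_sub ?_ ?_]
  refine (integral_neg_arctan_min_mul_innerFactorDeriv_nonneg hφc).trans
    (integral_mono_on zero_le_one ?_ ?_ fun x hx => neg_arctan_min_mul_innerFactorDeriv_le hφc hx)
  all_goals exact Continuous.intervalIntegrable (by fun_prop) _ _

theorem lemma_sign
    (φ : ℝ → ℝ) (hφ : ContDiff ℝ 1 φ) (hper : Function.Periodic φ 1)
    (hnc : ¬ ∃ c : ℝ, ∀ x, φ x = c) :
    Afun φ + Bfun φ - Cfun φ ≥
      Real.exp (hInt (fun x => min (φ x) 0) 1) *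
        (Afun (fun x => max (φ x) 0) + Bfun (fun x => max (φ x) 0) -
          Cfun (fun x => max (φ x) 0)) :=
  lemma_sign_general φ hφ
end

section
/- Let d > 0 and let φ be a non-constant C¹ 1-periodic function. Set b(x) = 2dφ'(x)φ(x)/(1+φ(x)²) + φ(x)√(1+φ(x)²). If there exist α ∈ ℝ and a C¹ 1-periodic function F with ∫_0^1 F(x) dx = 0 solving −d F'(x) + b(x) F(x) = φ'(x) + α(1+φ(x)²) for all x ∈ ℝ, then α < 0. -/
/-!
Multiplying the equation by a positive periodic solution `ρ` of the adjoint equation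
`d ρ' + b ρ = const` and integrating over a period, the terms in `F` disappear because `F` has
mean zero, leaving `∫ ρ φ' + α ∫ ρ (1 + φ²) = 0`. With `σ = ρ (1 + φ²)` and `θ = arctan φ`
one has `∫ ρ φ' = ∫ σ θ'`, and `σ' = q (κ - σ sin θ)` with `q = (1 + φ²) / d > 0`. Every
`∫ g(σ) σ'` over a period vanishes, so `∫ σ θ' = -∫ θ σ' = ∫ (arcsin (κ / σ) - θ) σ'`, whose
integrand `q σ (θ - arcsin (κ / σ)) (sin θ - κ / σ)` is nonnegative because `sin` is increasing on
`(-π/2, π/2)`, and vanishes identically only if `σ`, hence `θ` and `φ`, are constant.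
Hence `∫ ρ φ' > 0` and `α < 0`.
-/

open Real Function Set MeasureTheory intervalIntegral

namespace Function.Periodic

variable {f f' : ℝ → ℝ} {T : ℝ}

theorem integral_deriv_eq_zero (hper : Periodic f T) (hf : ∀ x, HasDerivAt f (f' x) x)
    (hf' : Continuous f') : ∫ x in 0..T, f' x = 0 := by
  rw [integral_eq_sub_of_hasDerivAt (fun x _ => hf x) (hf'.intervalIntegrable _ _),
    ← zero_add T, hper 0, sub_self]

theorem integral_comp_mul_deriv_eq_zero {g : ℝ → ℝ} (hper : Periodic f T)
    (hf : ∀ x, HasDerivAt f (f' x) x) (hf' : Continuous f') (hg : ContinuousOn g (range f)) :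
    ∫ x in 0..T, g (f x) * f' x = 0 := by
  have := integral_comp_mul_deriv' (fun x _ => hf x) hf'.continuousOn
    (hg.mono (image_subset_range f _)) (a := 0) (b := T)
  rw [← zero_add T, hper 0, integral_same] at this
  simpa using this

theorem intervalIntegral_pos_of_nonneg (hper : Periodic f T) (hT : 0 < T) (hf : Continuous f)
    (hnonneg : ∀ x, 0 ≤ f x) {x₀ : ℝ} (hx₀ : 0 < f x₀) : 0 < ∫ x in 0..T, f x := by
  set a := x₀ - T / 2
  have hx₀mem : x₀ ∈ support f ∩ Ioo a (a + T) :=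
    ⟨hx₀.ne', by simp only [a, mem_Ioo]; constructor <;> linarith⟩
  rw [← zero_add T, ← hper.intervalIntegral_add_eq a 0, integral_pos_iff_support_of_nonneg_ae
    (Filter.Eventually.of_forall hnonneg) (hf.intervalIntegrable _ _)]
  refine ⟨by linarith, ?_⟩
  calc (0 : ENNReal) < volume (support f ∩ Ioo a (a + T)) :=
        (hf.isOpen_support.inter isOpen_Ioo).measure_pos volume ⟨x₀, hx₀mem⟩
    _ ≤ volume (support f ∩ Ioc a (a + T)) :=
        measure_mono (inter_subset_inter_right _ Ioo_subset_Ioc_self)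

theorem deriv {𝕜 E : Type*} [NontriviallyNormedField 𝕜] [NormedAddCommGroup E]
    [NormedSpace 𝕜 E] {f : 𝕜 → E} {T : 𝕜} (hper : Periodic f T) :
    Periodic (_root_.deriv f) T := fun x => by
  rw [← deriv_comp_add_const, hper.funext]

end Function.Periodic

theorem exists_pos_periodic_hasDerivAt_sub_mul {a : ℝ → ℝ} {T : ℝ} (hT : 0 < T)
    (ha : Continuous a) (haper : Periodic a T) :
    ∃ κ : ℝ, ∃ ρ : ℝ → ℝ, (∀ x, 0 < ρ x) ∧ Periodic ρ T ∧
      ∀ x, HasDerivAt ρ (κ - a x * ρ x) x := by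
  set A : ℝ → ℝ := fun x => ∫ t in 0..x, a t
  set m := ∫ t in 0..T, a t
  have hA : ∀ x, HasDerivAt A (a x) x := fun x => (ha.integral_hasStrictDerivAt 0 x).hasDerivAt
  have hA_add : ∀ x, A (x + T) = A x + m := fun x => by
    simpa using haper.intervalIntegral_add_eq_add 0 x fun _ _ => ha.intervalIntegrable _ _
  set g : ℝ → ℝ := fun t => exp (A t)
  have hg : Continuous g :=
    continuous_exp.comp (continuous_iff_continuousAt.2 fun x => (hA x).continuousAt)
  have hg_add : ∀ x, g (x + T) = exp m * g x := fun x => by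
    simp only [g, hA_add, exp_add]
    ring
  set G : ℝ → ℝ := fun x => ∫ t in (x - T)..x, g t
  have hG : ∀ x, HasDerivAt G (g x - g (x - T)) x := by
    have hP : ∀ x, HasDerivAt (fun u => ∫ t in 0..u, g t) (g x) x := fun x =>
      (hg.integral_hasStrictDerivAt 0 x).hasDerivAt
    have hG_eq : G = fun x => (∫ t in 0..x, g t) - ∫ t in 0..(x - T), g t := funext fun x =>
      (integral_interval_sub_left (hg.intervalIntegrable _ _) (hg.intervalIntegrable _ _)).symm
    intro x
    rw [hG_eq]
    exact (hP x).sub ((hP (x - T)).comp_sub_const x T)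
  have hG_add : ∀ x, G (x + T) = exp m * G x := fun x => by
    calc G (x + T) = ∫ t in (x - T)..x, g (t + T) := by
          rw [integral_comp_add_right]; simp [G]
      _ = exp m * G x := by simp only [hg_add, intervalIntegral.integral_const_mul, G]
  refine ⟨1 - exp (-m), fun x => exp (-A x) * G x, fun x => ?_, fun x => ?_, fun x => ?_⟩
  · exact mul_pos (exp_pos _) (intervalIntegral_pos_of_pos_on (hg.intervalIntegrable _ _)
      (fun t _ => exp_pos _) (by linarith))
  · simp only [hA_add, hG_add, neg_add, exp_add, exp_neg]
    field_simp
  · refine ((hA x).fun_neg.exp.fun_mul (hG x)).congr_deriv ?_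
    have hg_sub : g (x - T) = exp (-m) * g x := by
      rw [← sub_add_cancel x T, hg_add, add_sub_cancel_right, ← mul_assoc, ← exp_add]
      simp
    simp only [hg_sub, g, exp_neg]
    field_simp
    ring

namespace Real

theorem sub_arcsin_mul_sin_sub_pos {θ y : ℝ} (hθ : θ ∈ Ioo (-(π / 2)) (π / 2))
    (hy : sin θ ≠ y) :
    0 < (θ - arcsin y) * (sin θ - y) := by
  rcases hy.lt_or_gt with hlt | hgt
  · have : θ < arcsin y := lt_of_not_ge fun h =>
      hlt.not_ge ((arcsin_le_iff_le_sin' ⟨hθ.1.le, hθ.2⟩).1 h)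
    exact mul_pos_of_neg_of_neg (by linarith) (by linarith)
  · have : arcsin y < θ := (arcsin_lt_iff_lt_sin' ⟨hθ.1, hθ.2.le⟩).2 hgt
    exact mul_pos (by linarith) (by linarith)

theorem sub_arcsin_mul_sin_sub_nonneg {θ y : ℝ} (hθ : θ ∈ Ioo (-(π / 2)) (π / 2)) :
    0 ≤ (θ - arcsin y) * (sin θ - y) := by
  rcases eq_or_ne (sin θ) y with h | h
  · simp [h]
  · exact (sub_arcsin_mul_sin_sub_pos hθ h).le

end Real

theorem integral_mul_deriv_pos_of_hasDerivAt {σ θ θ' q : ℝ → ℝ} {κ T : ℝ} (hT : 0 < T)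
    (hσ : ∀ x, HasDerivAt σ (q x * (κ - σ x * sin (θ x))) x) (hσpos : ∀ x, 0 < σ x)
    (hσper : Periodic σ T) (hq : Continuous q) (hqpos : ∀ x, 0 < q x) (hqper : Periodic q T)
    (hθ : ∀ x, HasDerivAt θ (θ' x) x) (hθ' : Continuous θ') (hθper : Periodic θ T)
    (hθmem : ∀ x, θ x ∈ Ioo (-(π / 2)) (π / 2)) (hθnc : ¬ ∃ c, ∀ x, θ x = c) :
    0 < ∫ x in 0..T, σ x * θ' x := by
  have hσc : Continuous σ := continuous_iff_continuousAt.2 fun x => (hσ x).continuousAt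
  have hθc : Continuous θ := continuous_iff_continuousAt.2 fun x => (hθ x).continuousAt
  have hσne : ∀ x, σ x ≠ 0 := fun x => (hσpos x).ne'
  set σ' := fun x => q x * (κ - σ x * sin (θ x))
  have hσ'c : Continuous σ' := hq.mul (continuous_const.sub (hσc.mul (continuous_sin.comp hθc)))
  set y := fun x => κ / σ x
  set R := fun x => q x * σ x * ((θ x - arcsin (y x)) * (sin (θ x) - y x))
  have hRc : Continuous R := by simp only [R, y]; fun_prop (disch := exact hσne)
  have hIBP : ∫ x in 0..T, (σ' x * θ x + σ x * θ' x) = 0 :=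
    (hσper.mul hθper).integral_deriv_eq_zero (fun x => (hσ x).mul (hθ x))
      ((hσ'c.mul hθc).add (hσc.mul hθ'))
  have hcomp : ∫ x in 0..T, arcsin (κ / σ x) * σ' x = 0 :=
    hσper.integral_comp_mul_deriv_eq_zero (g := fun u => arcsin (κ / u)) hσ hσ'c
      (continuous_arcsin.comp_continuousOn
        (continuousOn_const.div continuousOn_id fun _ ⟨x, hx⟩ => hx ▸ hσne x))
  have hR : ∫ x in 0..T, σ x * θ' x = ∫ x in 0..T, R x := by
    have hR_eq : ∀ x,
        σ x * θ' x - R x = (σ' x * θ x + σ x * θ' x) - arcsin (κ / σ x) * σ' x := by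
      intro x
      have := hσne x
      simp only [R, σ', y]
      field_simp
      ring
    have hdiff := integral_congr (μ := volume) (a := 0) (b := T) fun x _ => hR_eq x
    rw [intervalIntegral.integral_sub, intervalIntegral.integral_sub, hIBP, hcomp, sub_zero,
      sub_eq_zero] at hdiff
    · exact hdiff
    all_goals exact Continuous.intervalIntegrable (by fun_prop (disch := exact hσne)) _ _
  have hRnonneg : ∀ x, 0 ≤ R x := fun x =>
    mul_nonneg (mul_pos (hqpos x) (hσpos x)).le (sub_arcsin_mul_sin_sub_nonneg (hθmem x))
  obtain ⟨x₀, hx₀⟩ : ∃ x, sin (θ x) ≠ y x := by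
    by_contra! h
    have hσ'_zero : ∀ x, σ' x = 0 := fun x => by
      simp only [σ', h x, y, mul_div_cancel₀ _ (hσne x), sub_self, mul_zero]
    have hσ_const : ∀ x, σ x = σ 0 := fun x => is_const_of_deriv_eq_zero
      (fun x => (hσ x).differentiableAt) (fun x => (hσ x).deriv.trans (hσ'_zero x)) x 0
    refine hθnc ⟨θ 0, fun x => injOn_sin (Ioo_subset_Icc_self (hθmem x))
      (Ioo_subset_Icc_self (hθmem 0)) ?_⟩
    simp only [h x, h 0, y, hσ_const x]
  have hRper : Periodic R T := fun x => by simp only [R, y, hqper x, hσper x, hθper x]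
  rw [hR]
  exact hRper.intervalIntegral_pos_of_nonneg hT hRc hRnonneg
    (mul_pos (mul_pos (hqpos x₀) (hσpos x₀)) (sub_arcsin_mul_sin_sub_pos (hθmem x₀) hx₀))

theorem integral_mul_eq_of_adjoint {ρ ρ' F F' b : ℝ → ℝ} {d k T : ℝ}
    (hρ : ∀ x, HasDerivAt ρ (ρ' x) x) (hρ' : Continuous ρ') (hρper : Periodic ρ T)
    (hF : ∀ x, HasDerivAt F (F' x) x) (hF' : Continuous F') (hFper : Periodic F T)
    (hadj : ∀ x, d * ρ' x + b x * ρ x = k) :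
    ∫ x in 0..T, ρ x * (-d * F' x + b x * F x) = k * ∫ x in 0..T, F x := by
  have hρc : Continuous ρ := continuous_iff_continuousAt.2 fun x => (hρ x).continuousAt
  have hFc : Continuous F := continuous_iff_continuousAt.2 fun x => (hF x).continuousAt
  have hIBP : ∫ x in 0..T, (ρ' x * F x + ρ x * F' x) = 0 :=
    (hρper.mul hFper).integral_deriv_eq_zero (fun x => (hρ x).mul (hF x))
      ((hρ'.mul hFc).add (hρc.mul hF'))
  calc ∫ x in 0..T, ρ x * (-d * F' x + b x * F x)
      = ∫ x in 0..T, (-d * (ρ' x * F x + ρ x * F' x) + k * F x) :=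
        integral_congr fun x _ => by rw [← hadj x]; ring
    _ = k * ∫ x in 0..T, F x := by
        rw [intervalIntegral.integral_add, intervalIntegral.integral_const_mul,
          intervalIntegral.integral_const_mul, hIBP, mul_zero, zero_add]
        all_goals exact Continuous.intervalIntegrable (by fun_prop) _ _

theorem hasDerivAt_mul_one_add_sq {ρ φ : ℝ → ℝ} {d κ φ' x : ℝ} (hd : d ≠ 0)
    (hφ : HasDerivAt φ φ' x)
    (hρ : HasDerivAt ρ
      (κ - (2 * d * φ' * φ x / (1 + φ x ^ 2) + φ x * √(1 + φ x ^ 2)) / d * ρ x) x) :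
    HasDerivAt (fun y => ρ y * (1 + φ y ^ 2))
      ((1 + φ x ^ 2) / d * (d * κ - ρ x * (1 + φ x ^ 2) * sin (arctan (φ x)))) x := by
  refine (hρ.fun_mul ((hφ.fun_pow 2).const_add 1)).congr_deriv ?_
  have hp : 0 < 1 + φ x ^ 2 := by positivity
  have hsqrt : √(1 + φ x ^ 2) ^ 2 = 1 + φ x ^ 2 := sq_sqrt hp.le
  rw [sin_arctan]
  field_simp
  linear_combination (-(φ x * ρ x * (1 + φ x ^ 2))) * hsqrt

theorem integral_mul_deriv_pos_of_adjoint {ρ φ : ℝ → ℝ} {d κ T : ℝ} (hT : 0 < T)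
    (hd : 0 < d) (hφ : ContDiff ℝ 1 φ) (hper : Periodic φ T) (hnc : ¬ ∃ c, ∀ x, φ x = c)
    (hρpos : ∀ x, 0 < ρ x) (hρper : Periodic ρ T)
    (hρ : ∀ x, HasDerivAt ρ
      (κ - (2 * d * deriv φ x * φ x / (1 + φ x ^ 2) + φ x * √(1 + φ x ^ 2)) / d * ρ x) x) :
    0 < ∫ x in 0..T, ρ x * deriv φ x := by
  have hφc := hφ.continuous
  have hφ'c := hφ.continuous_deriv le_rfl
  have hρc : Continuous ρ := continuous_iff_continuousAt.2 fun x => (hρ x).continuousAt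
  have hφd : ∀ x, HasDerivAt φ (deriv φ x) x := fun x =>
    (hφ.differentiable one_ne_zero x).hasDerivAt
  have hσθ : ∀ x,
      ρ x * deriv φ x = ρ x * (1 + φ x ^ 2) * (1 / (1 + φ x ^ 2) * deriv φ x) := fun x => by
    field_simp
  simp only [hσθ]
  exact integral_mul_deriv_pos_of_hasDerivAt (q := fun x => (1 + φ x ^ 2) / d) (κ := d * κ) hT
    (fun x => hasDerivAt_mul_one_add_sq hd.ne' (hφd x) (hρ x))
    (fun x => mul_pos (hρpos x) (by positivity)) (fun x => by simp only [hρper x, hper x])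
    (by fun_prop) (fun x => by positivity) (fun x => by simp only [hper x])
    (fun x => (hφd x).arctan) (by fun_prop (disch := intro; positivity))
    (fun x => by simp only [hper x])
    (fun x => ⟨neg_pi_div_two_lt_arctan _, arctan_lt_pi_div_two _⟩)
    (fun ⟨c, hc⟩ => hnc ⟨tan c, fun x => by rw [← hc x, tan_arctan]⟩)

theorem key_lemma
    (d : ℝ) (hd : 0 < d)
    (φ : ℝ → ℝ) (hφ : ContDiff ℝ 1 φ) (hper : Function.Periodic φ 1)
    (hnc : ¬ ∃ c : ℝ, ∀ x, φ x = c)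
    (α : ℝ) (F : ℝ → ℝ) (hF : ContDiff ℝ 1 F) (hFper : Function.Periodic F 1)
    (hFmean : (∫ x in (0:ℝ)..1, F x) = 0)
    (heq : ∀ x, -d * deriv F x +
        (2 * d * deriv φ x * φ x / (1 + φ x ^ 2) +
          φ x * Real.sqrt (1 + φ x ^ 2)) * F x =
      deriv φ x + α * (1 + φ x ^ 2)) :
    α < 0 := by
  have hφc := hφ.continuous
  have hφ'c := hφ.continuous_deriv le_rfl
  set b := fun x => 2 * d * deriv φ x * φ x / (1 + φ x ^ 2) + φ x * √(1 + φ x ^ 2)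
  have hb : Continuous b := by fun_prop (disch := intro; positivity)
  have hbper : Periodic b 1 := fun x => by simp only [b, hper x, hper.deriv x]
  obtain ⟨κ, ρ, hρpos, hρper, hρ⟩ :=
    exists_pos_periodic_hasDerivAt_sub_mul one_pos (hb.div_const d) fun x =>
      congrArg (· / d) (hbper x)
  have hρc : Continuous ρ := continuous_iff_continuousAt.2 fun x => (hρ x).continuousAt
  have hdual : ∫ x in 0..1, ρ x * (deriv φ x + α * (1 + φ x ^ 2)) = 0 := by
    have := integral_mul_eq_of_adjoint hρ (by fun_prop) hρper
      (fun x => (hF.differentiable one_ne_zero x).hasDerivAt) (hF.continuous_deriv le_rfl) hFper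
      (fun x => show d * (κ - b x / d * ρ x) + b x * ρ x = d * κ by field_simp; ring)
    simpa only [b, heq, hFmean, mul_zero] using this
  have hsplit : ∫ x in 0..1, ρ x * (deriv φ x + α * (1 + φ x ^ 2)) =
      (∫ x in 0..1, ρ x * deriv φ x) + α * ∫ x in 0..1, ρ x * (1 + φ x ^ 2) := by
    rw [← intervalIntegral.integral_const_mul, ← intervalIntegral.integral_add
      (Continuous.intervalIntegrable (by fun_prop) _ _)
      (Continuous.intervalIntegrable (by fun_prop) _ _)]
    exact integral_congr fun x _ => by ring
  have hφ'_pos := integral_mul_deriv_pos_of_adjoint one_pos hd hφ hper hnc hρpos hρper hρ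
  have hρp_pos : 0 < ∫ x in 0..1, ρ x * (1 + φ x ^ 2) := intervalIntegral_pos_of_pos_on
    (Continuous.intervalIntegrable (by fun_prop) _ _)
    (fun x _ => mul_pos (hρpos x) (by positivity)) one_pos
  nlinarith
end

section
/- Let v : ℝ → ℝ be a smooth 1-periodic function, d > 0, γ ≠ 0, μ ∈ ℝ, and suppose w is a C² 1-periodic solution of −dγ² w''/(γ² + (μ + w')²) + √(γ² + (μ + w')²) + γ v(y) = H̄ on ℝ for a constant H̄. Then H̄ = ∫_0^1 √(γ² + (μ + w'(y))²) dy + γ ∫_0^1 v(y) dy, and consequently H̄ ≥ √(γ² + μ²) + γ ∫_0^1 v(y) dy. -/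
theorem cell_problem_average_identity
    (v : ℝ → ℝ) (hv : ContDiff ℝ (⊤ : ℕ∞) v) (hvper : Function.Periodic v 1)
    (d γ μ : ℝ) (hd : 0 < d) (hγ : γ ≠ 0)
    (w : ℝ → ℝ) (hw : ContDiff ℝ 2 w) (hwper : Function.Periodic w 1)
    (H : ℝ)
    (heq : ∀ y, -d * γ ^ 2 * deriv (deriv w) y / (γ ^ 2 + (μ + deriv w y) ^ 2) +
        Real.sqrt (γ ^ 2 + (μ + deriv w y) ^ 2) + γ * v y = H) :
    H = (∫ y in (0:ℝ)..1, Real.sqrt (γ ^ 2 + (μ + deriv w y) ^ 2)) +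
        γ * ∫ y in (0:ℝ)..1, v y ∧
      H ≥ Real.sqrt (γ ^ 2 + μ ^ 2) + γ * ∫ y in (0:ℝ)..1, v y := by
  have hγ2 : 0 < γ ^ 2 := by positivity
  -- regularity facts
  have hw1 : ContDiff ℝ 1 (deriv w) := by
    have h2 : ContDiff ℝ ((1 : ℕ) + 1) w := by exact_mod_cast hw
    exact (contDiff_succ_iff_deriv.mp h2).2.2
  have hwd : Differentiable ℝ w := hw.differentiable (by norm_num)
  have hw'c : Continuous (deriv w) := hw1.continuous
  have hw'd : Differentiable ℝ (deriv w) := hw1.differentiable one_ne_zero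
  have hw''c : Continuous (deriv (deriv w)) := (contDiff_one_iff_deriv.mp hw1).2
  have hDpos : ∀ y : ℝ, 0 < γ ^ 2 + (μ + deriv w y) ^ 2 := fun y => by positivity
  -- the curvature term integrates to zero
  set g : ℝ → ℝ := fun y => d * γ * Real.arctan ((μ + deriv w y) / γ) with hg
  set A : ℝ → ℝ := fun y => d * γ ^ 2 * deriv (deriv w) y / (γ ^ 2 + (μ + deriv w y) ^ 2)
    with hA
  have hgderiv : ∀ y : ℝ, HasDerivAt g (A y) y := by
    intro y
    have h1 : HasDerivAt (fun y => (μ + deriv w y) / γ) (deriv (deriv w) y / γ) y := by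
      exact (((hw'd y).hasDerivAt.const_add μ).div_const γ)
    have h2 := (h1.arctan).const_mul (d * γ)
    refine HasDerivAt.congr_deriv h2 ?_
    symm
    have hD : (γ ^ 2 + (μ + deriv w y) ^ 2) ≠ 0 := (hDpos y).ne'
    have : 1 + ((μ + deriv w y) / γ) ^ 2 = (γ ^ 2 + (μ + deriv w y) ^ 2) / γ ^ 2 := by
      field_simp
    rw [this, one_div_div, div_mul_div_comm, ← mul_div_assoc,
      div_eq_div_iff hD (mul_ne_zero hD hγ)]
    ring
  have hAcont : Continuous A := by
    apply Continuous.div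
    · exact continuous_const.mul hw''c
    · exact continuous_const.add ((continuous_const.add hw'c).pow 2)
    · exact fun y => (hDpos y).ne'
  have hintA : (∫ y in (0:ℝ)..1, A y) = 0 := by
    rw [intervalIntegral.integral_eq_sub_of_hasDerivAt
      (fun y _ => hgderiv y) (hAcont.intervalIntegrable 0 1)]
    have : deriv w 1 = deriv w 0 := by
      have hc : HasDerivAt (fun y : ℝ => w (y + 1)) (deriv w (0 + 1) * 1) 0 :=
        ((hwd (0 + 1)).hasDerivAt).comp 0 ((hasDerivAt_id 0).add_const 1)
      have h1 : (fun y : ℝ => w (y + 1)) = w := funext hwper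
      rw [h1] at hc
      simpa using hc.deriv.symm
    simp [hg, this]
  -- continuity of the other pieces
  have hBcont : Continuous (fun y => Real.sqrt (γ ^ 2 + (μ + deriv w y) ^ 2)) :=
    (continuous_const.add ((continuous_const.add hw'c).pow 2)).sqrt
  have hvc : Continuous v := hv.continuous
  -- integrate the equation
  have key : H = (∫ y in (0:ℝ)..1, Real.sqrt (γ ^ 2 + (μ + deriv w y) ^ 2)) +
      γ * ∫ y in (0:ℝ)..1, v y := by
    have h1 : (∫ y in (0:ℝ)..1, (-(A y) + Real.sqrt (γ ^ 2 + (μ + deriv w y) ^ 2) + γ * v y))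
        = ∫ y in (0:ℝ)..1, H := by
      apply intervalIntegral.integral_congr
      intro y _
      have := heq y
      simp only [hA]
      rw [← this]
      ring_nf
    rw [intervalIntegral.integral_add, intervalIntegral.integral_add] at h1
    · rw [intervalIntegral.integral_neg, hintA, intervalIntegral.integral_const,
        intervalIntegral.integral_const_mul] at h1
      simp at h1
      linarith [h1]
    · exact hAcont.neg.intervalIntegrable 0 1
    · exact hBcont.intervalIntegrable 0 1
    · exact (hAcont.neg.intervalIntegrable 0 1).add (hBcont.intervalIntegrable 0 1)
    · exact (continuous_const.mul hvc).intervalIntegrable 0 1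
  refine ⟨key, ?_⟩
  -- lower bound via convexity (tangent line at μ) and ∫ w' = 0
  set s := Real.sqrt (γ ^ 2 + μ ^ 2) with hs
  have hspos : 0 < s := Real.sqrt_pos.mpr (by positivity)
  have hs2 : s ^ 2 = γ ^ 2 + μ ^ 2 := Real.sq_sqrt (by positivity)
  have hpt : ∀ y : ℝ, s + (μ / s) * deriv w y ≤
      Real.sqrt (γ ^ 2 + (μ + deriv w y) ^ 2) := by
    intro y
    set t := deriv w y
    set L := Real.sqrt (γ ^ 2 + (μ + t) ^ 2) with hL
    have hLnn : 0 ≤ L := Real.sqrt_nonneg _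
    have hL2 : L ^ 2 = γ ^ 2 + (μ + t) ^ 2 := Real.sq_sqrt (by positivity)
    have hCS : s ^ 2 + μ * t ≤ s * L := by
      nlinarith [sq_nonneg (γ * t), sq_nonneg (s * L - (s ^ 2 + μ * t)),
        sq_nonneg (s * L + (s ^ 2 + μ * t)), mul_nonneg hspos.le hLnn]
    have h3 : s * (s + μ / s * t) = s ^ 2 + μ * t := by
      field_simp
    nlinarith [hCS, h3, hspos]
  have hintw' : (∫ y in (0:ℝ)..1, deriv w y) = 0 := by
    rw [intervalIntegral.integral_deriv_eq_sub (fun y _ => hwd y) (hw'c.intervalIntegrable 0 1)]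
    have : w 1 = w 0 := by have := hwper 0; simpa using this
    simp [this]
  have hmono : (∫ y in (0:ℝ)..1, (s + (μ / s) * deriv w y)) ≤
      ∫ y in (0:ℝ)..1, Real.sqrt (γ ^ 2 + (μ + deriv w y) ^ 2) := by
    apply intervalIntegral.integral_mono_on (by norm_num)
    · exact (continuous_const.add (continuous_const.mul hw'c)).intervalIntegrable 0 1
    · exact hBcont.intervalIntegrable 0 1
    · exact fun y _ => hpt y
  rw [intervalIntegral.integral_add (f := fun _ => s) (g := fun y => μ / s * deriv w y)
      (continuous_const.intervalIntegrable 0 1)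
      ((continuous_const.mul hw'c).intervalIntegrable 0 1),
    intervalIntegral.integral_const_mul, hintw', intervalIntegral.integral_const] at hmono
  simp at hmono
  rw [key]
  linarith
end

section
/- Let v : ℝ → ℝ be a smooth 1-periodic function, d > 0, γ ≠ 0, μ ∈ ℝ, and suppose w is a C² 1-periodic solution of −dγ² w''/(γ² + (μ + w')²) + √(γ² + (μ + w')²) + γ v(y) = H̄ on ℝ for a constant H̄. Then H̄ ≤ |(γ,μ)| + max_ℝ (γ v), and max_ℝ |μ + w'| ≤ H̄ − min_ℝ (γ v). -/
private lemma aux_periodic_max (f : ℝ → ℝ) (hf : Continuous f)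
    (hp : Function.Periodic f 1) : ∃ x, ∀ y, f y ≤ f x := by
  obtain ⟨m, hmem, hub⟩ :=
    (hp.compact_of_continuous one_ne_zero hf).exists_isGreatest ⟨f 0, Set.mem_range_self 0⟩
  obtain ⟨x, hx⟩ := hmem
  exact ⟨x, fun y => by rw [hx]; exact hub (Set.mem_range_self y)⟩

private lemma aux_periodic_min (f : ℝ → ℝ) (hf : Continuous f)
    (hp : Function.Periodic f 1) : ∃ x, ∀ y, f x ≤ f y := by
  obtain ⟨m, hmem, hlb⟩ :=
    (hp.compact_of_continuous one_ne_zero hf).exists_isLeast ⟨f 0, Set.mem_range_self 0⟩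
  obtain ⟨x, hx⟩ := hmem
  exact ⟨x, fun y => by rw [hx]; exact hlb (Set.mem_range_self y)⟩

private lemma aux_deriv_periodic (f : ℝ → ℝ) (hp : Function.Periodic f 1) :
    Function.Periodic (deriv f) 1 := by
  intro y
  have h1 : (fun x => f (x + 1)) = f := funext hp
  calc deriv f (y + 1) = deriv (fun x => f (x + 1)) y := (deriv_comp_add_const f 1 y).symm
    _ = deriv f y := by rw [h1]

private lemma aux_contDiff_deriv (w : ℝ → ℝ) (hw : ContDiff ℝ 2 w) :
    ContDiff ℝ 1 (deriv w) := by
  have h21 : ContDiff ℝ ((1 : ℕ) + 1) w := by exact_mod_cast hw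
  exact (contDiff_succ_iff_deriv.mp h21).2.2

private lemma aux_second_deriv_nonneg (w : ℝ → ℝ) (hw : ContDiff ℝ 2 w) (x0 : ℝ)
    (hmin : ∀ y, w x0 ≤ w y) : 0 ≤ deriv (deriv w) x0 := by
  have hw1 : ContDiff ℝ 1 (deriv w) := aux_contDiff_deriv w hw
  have hcont2 : Continuous (deriv (deriv w)) := (contDiff_one_iff_deriv.mp hw1).2
  have hloc : IsLocalMin w x0 := Filter.Eventually.of_forall hmin
  have hu0 : deriv w x0 = 0 := hloc.deriv_eq_zero
  by_contra hcon
  push_neg at hcon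
  have hopen : IsOpen {x | deriv (deriv w) x < 0} := isOpen_lt hcont2 continuous_const
  obtain ⟨δ, hδ, hball⟩ := Metric.isOpen_iff.mp hopen x0 hcon
  set b := x0 + δ / 2 with hb
  have hx0b : x0 < b := by simp only [hb]; linarith
  have hsub : Set.Icc x0 b ⊆ Metric.ball x0 δ := by
    intro x hx
    rw [Metric.mem_ball, Real.dist_eq]
    rw [abs_lt]
    constructor
    · have := hx.1; linarith
    · have := hx.2; rw [hb] at this; linarith
  have hanti_u : StrictAntiOn (deriv w) (Set.Icc x0 b) := by
    apply strictAntiOn_of_deriv_neg (convex_Icc _ _) hw1.continuous.continuousOn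
    intro x hx
    rw [interior_Icc] at hx
    exact hball (hsub (Set.Ioo_subset_Icc_self hx))
  have hanti_w : StrictAntiOn w (Set.Icc x0 b) := by
    apply strictAntiOn_of_deriv_neg (convex_Icc _ _) hw.continuous.continuousOn
    intro x hx
    rw [interior_Icc] at hx
    have : deriv w x < deriv w x0 :=
      hanti_u (Set.left_mem_Icc.mpr hx0b.le) (Set.Ioo_subset_Icc_self hx) hx.1
    rwa [hu0] at this
  have hlt : w b < w x0 :=
    hanti_w (Set.left_mem_Icc.mpr hx0b.le) (Set.right_mem_Icc.mpr hx0b.le) hx0b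
  exact absurd (hmin b) (not_le.mpr hlt)

theorem cell_problem_maximum_principle_bounds
    (v : ℝ → ℝ) (hv : ContDiff ℝ (⊤ : ℕ∞) v) (hvper : Function.Periodic v 1)
    (d γ μ : ℝ) (hd : 0 < d) (hγ : γ ≠ 0)
    (w : ℝ → ℝ) (hw : ContDiff ℝ 2 w) (hwper : Function.Periodic w 1)
    (H : ℝ)
    (heq : ∀ y, -d * γ ^ 2 * deriv (deriv w) y / (γ ^ 2 + (μ + deriv w y) ^ 2) +
        Real.sqrt (γ ^ 2 + (μ + deriv w y) ^ 2) + γ * v y = H)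
    (Mv mv : ℝ)
    (hMv : IsGreatest (Set.range fun y => γ * v y) Mv)
    (hmv : IsLeast (Set.range fun y => γ * v y) mv) :
    H ≤ Real.sqrt (γ ^ 2 + μ ^ 2) + Mv ∧
      ∀ y, |μ + deriv w y| ≤ H - mv := by
  have hγ2 : (0 : ℝ) < γ ^ 2 := by positivity
  have hw1 : ContDiff ℝ 1 (deriv w) := aux_contDiff_deriv w hw
  have hud : Differentiable ℝ (deriv w) := hw1.differentiable one_ne_zero
  have hcu : Continuous (deriv w) := hw1.continuous
  have hup : Function.Periodic (deriv w) 1 := aux_deriv_periodic w hwper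
  constructor
  · -- Part 1: at a global minimum of w
    obtain ⟨x0, hx0⟩ := aux_periodic_min w hw.continuous hwper
    have hW0 : 0 ≤ deriv (deriv w) x0 := aux_second_deriv_nonneg w hw x0 hx0
    have hloc : IsLocalMin w x0 := Filter.Eventually.of_forall hx0
    have hu0 : deriv w x0 = 0 := hloc.deriv_eq_zero
    have hE0 := heq x0
    rw [hu0] at hE0
    simp only [add_zero] at hE0
    have hterm : -d * γ ^ 2 * deriv (deriv w) x0 / (γ ^ 2 + μ ^ 2) ≤ 0 := by
      apply div_nonpos_iff.mpr
      right
      constructor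
      · nlinarith [mul_nonneg (mul_nonneg hd.le hγ2.le) hW0]
      · positivity
    have hMvx : γ * v x0 ≤ Mv := hMv.2 ⟨x0, rfl⟩
    linarith
  · -- Part 2
    -- A Rolle point c where w'' vanishes, giving H - mv ≥ 0
    have hu01 : deriv w 0 = deriv w 1 := by
      have := hup 0
      simp only [zero_add] at this
      exact this.symm
    obtain ⟨c, hcI, hc⟩ := exists_deriv_eq_zero (by norm_num : (0 : ℝ) < 1)
      hcu.continuousOn hu01
    have hEc := heq c
    rw [hc] at hEc
    simp only [mul_zero, zero_div, zero_add] at hEc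
    have hmvc : mv ≤ γ * v c := hmv.2 ⟨c, rfl⟩
    have hsqc : 0 ≤ Real.sqrt (γ ^ 2 + (μ + deriv w c) ^ 2) := Real.sqrt_nonneg _
    have hHmv : 0 ≤ H - mv := by linarith
    -- global max of (μ + w')²
    obtain ⟨x1, hx1⟩ := aux_periodic_max (fun y => (μ + deriv w y) ^ 2)
      ((continuous_const.add hcu).pow 2) (fun y => by simp [hup y])
    have hder : HasDerivAt (fun y => (μ + deriv w y) ^ 2)
        ((2 : ℕ) * (μ + deriv w x1) ^ (2 - 1) * deriv (deriv w) x1) x1 :=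
      (((hud x1).hasDerivAt).const_add μ).pow 2
    have hzero : ((2 : ℕ) : ℝ) * (μ + deriv w x1) ^ (2 - 1) * deriv (deriv w) x1 = 0 :=
      IsLocalMax.hasDerivAt_eq_zero (Filter.Eventually.of_forall hx1) hder
    have hcases : μ + deriv w x1 = 0 ∨ deriv (deriv w) x1 = 0 := by
      rcases mul_eq_zero.mp hzero with h | h
      · rcases mul_eq_zero.mp h with h2 | h3
        · norm_num at h2
        · left; simpa using h3
      · right; exact h
    intro y
    have hy2 : (μ + deriv w y) ^ 2 ≤ (μ + deriv w x1) ^ 2 := hx1 y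
    rcases hcases with h0 | hW1
    · have hle : (μ + deriv w y) ^ 2 ≤ 0 := by rw [h0] at hy2; simpa using hy2
      have hy0 : μ + deriv w y = 0 := by nlinarith [sq_nonneg (μ + deriv w y)]
      rw [hy0]
      simpa using hHmv
    · have hEx1 := heq x1
      rw [hW1] at hEx1
      simp only [mul_zero, zero_div, zero_add] at hEx1
      have hmvx1 : mv ≤ γ * v x1 := hmv.2 ⟨x1, rfl⟩
      have h1 : |μ + deriv w y| ≤ |μ + deriv w x1| := by
        rw [← Real.sqrt_sq_eq_abs, ← Real.sqrt_sq_eq_abs]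
        exact Real.sqrt_le_sqrt hy2
      have h2 : |μ + deriv w x1| ≤ Real.sqrt (γ ^ 2 + (μ + deriv w x1) ^ 2) := by
        rw [← Real.sqrt_sq_eq_abs]
        exact Real.sqrt_le_sqrt (by nlinarith)
      linarith
end

section
/- Let v : ℝ → ℝ be a smooth 1-periodic function, γ ≠ 0, μ ∈ ℝ. For d > 0 let w_d be the C² 1-periodic solution with w_d(0) = 0 of the cell problem −dγ² w''/(γ²+(μ+w')²) + √(γ²+(μ+w')²) + γv = H̄_d, and suppose |μ + w_d'| ≤ M and |H̄_d| ≤ M uniformly in d for some M > 0. Then max_ℝ |w_d''| ≤ C/d for a constant C depending only on M, γ, and max|v|; consequently w_d' → 0 and w_d → 0 uniformly on ℝ as d → +∞, and lim_{d→+∞} H̄_d = √(γ²+μ²) + γ∫_0^1 v dy. -/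
open Filter Real Set

private lemma sqrt_lip' (γ μ t : ℝ) :
    |Real.sqrt (γ^2+(μ+t)^2) - Real.sqrt (γ^2+μ^2)| ≤ |t| := by
  have hA : (0:ℝ) ≤ γ^2+(μ+t)^2 := by positivity
  have hB : (0:ℝ) ≤ γ^2+μ^2 := by positivity
  have hmuA : |μ| ≤ Real.sqrt (γ^2+μ^2) := by
    rw [← Real.sqrt_sq_eq_abs]; exact Real.sqrt_le_sqrt (by nlinarith)
  have hmuB : |μ + t| ≤ Real.sqrt (γ^2+(μ+t)^2) := by
    rw [← Real.sqrt_sq_eq_abs]; exact Real.sqrt_le_sqrt (by nlinarith)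
  have h1 : Real.sqrt (γ^2+(μ+t)^2) ≤ Real.sqrt (γ^2+μ^2) + |t| := by
    rw [show Real.sqrt (γ^2+μ^2) + |t| = Real.sqrt ((Real.sqrt (γ^2+μ^2) + |t|)^2) by
      rw [Real.sqrt_sq (by positivity)]]
    apply Real.sqrt_le_sqrt
    have := Real.sq_sqrt hB
    nlinarith [abs_nonneg t, abs_nonneg μ, neg_abs_le μ, le_abs_self μ, neg_abs_le t,
      le_abs_self t]
  have h2 : Real.sqrt (γ^2+μ^2) ≤ Real.sqrt (γ^2+(μ+t)^2) + |t| := by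
    rw [show Real.sqrt (γ^2+(μ+t)^2) + |t| = Real.sqrt ((Real.sqrt (γ^2+(μ+t)^2) + |t|)^2) by
      rw [Real.sqrt_sq (by positivity)]]
    apply Real.sqrt_le_sqrt
    have := Real.sq_sqrt hA
    nlinarith [abs_nonneg t, neg_abs_le (μ+t), le_abs_self (μ+t), neg_abs_le t, le_abs_self t]
  rw [abs_sub_le_iff]; exact ⟨by linarith, by linarith⟩

theorem large_markstein_limit
    (v : ℝ → ℝ) (hv : ContDiff ℝ (⊤ : ℕ∞) v) (hvper : Function.Periodic v 1)
    (γ μ M : ℝ) (hγ : γ ≠ 0) (hM : 0 < M)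
    (w : ℝ → ℝ → ℝ) (H : ℝ → ℝ)
    (hw : ∀ d, 0 < d → ContDiff ℝ 2 (w d))
    (hwper : ∀ d, 0 < d → Function.Periodic (w d) 1)
    (hw0 : ∀ d, 0 < d → w d 0 = 0)
    (heq : ∀ d, 0 < d → ∀ y,
      -d * γ ^ 2 * deriv (deriv (w d)) y / (γ ^ 2 + (μ + deriv (w d) y) ^ 2) +
        Real.sqrt (γ ^ 2 + (μ + deriv (w d) y) ^ 2) + γ * v y = H d)
    (hgrad : ∀ d, 0 < d → ∀ y, |μ + deriv (w d) y| ≤ M)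
    (hHbd : ∀ d, 0 < d → |H d| ≤ M) :
    (∃ C : ℝ, 0 < C ∧ ∀ d, 0 < d → ∀ y, |deriv (deriv (w d)) y| ≤ C / d) ∧
    TendstoUniformly (fun d y => deriv (w d) y) (fun _ => 0) Filter.atTop ∧
    TendstoUniformly (fun d y => w d y) (fun _ => 0) Filter.atTop ∧
    Filter.Tendsto H Filter.atTop
      (nhds (Real.sqrt (γ ^ 2 + μ ^ 2) + γ * ∫ y in (0:ℝ)..1, v y)) := by
  -- a uniform bound on v
  obtain ⟨B, hBnn, hB⟩ : ∃ B, 0 ≤ B ∧ ∀ y, |v y| ≤ B := by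
    obtain ⟨x₀, -, hx₀⟩ := isCompact_Icc.exists_isMaxOn (Set.nonempty_Icc.2 zero_le_one)
      ((hv.continuous.abs).continuousOn (s := Icc (0:ℝ) 1))
    refine ⟨|v x₀|, abs_nonneg _, fun y => ?_⟩
    have h := hvper.sub_int_mul_eq (x := y) (n := ⌊y⌋)
    rw [mul_one] at h
    have hfr : Int.fract y ∈ Icc (0:ℝ) 1 := ⟨Int.fract_nonneg y, (Int.fract_lt_one y).le⟩
    rw [Int.fract] at hfr
    have h2 : |v (y - ↑⌊y⌋)| ≤ |v x₀| := hx₀ hfr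
    rw [h] at h2; exact h2
  have hγ2 : (0:ℝ) < γ ^ 2 := by positivity
  set K : ℝ := Real.sqrt (γ^2 + M^2) + |γ| * B + M with hKdef
  have hK : 0 < K := by positivity
  have hQm : (0:ℝ) < γ^2 + M^2 := by positivity
  set C : ℝ := K * (γ^2 + M^2) / γ^2 with hCdef
  have hC : 0 < C := by positivity
  -- basic regularity facts
  have hreg : ∀ d, 0 < d → Differentiable ℝ (w d) ∧ Differentiable ℝ (deriv (w d)) ∧
      Continuous (deriv (deriv (w d))) := by
    intro d hd
    have h := hw d hd
    rw [show (2 : WithTop ℕ∞) = 1 + 1 from rfl, contDiff_succ_iff_deriv] at h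
    obtain ⟨h1, -, h2⟩ := h
    rw [contDiff_one_iff_deriv] at h2
    exact ⟨h1, h2.1, h2.2⟩
  have hdper : ∀ d, 0 < d → Function.Periodic (deriv (w d)) 1 := by
    intro d hd x
    have hfe : (fun y => w d (y+1)) = w d := funext fun y => hwper d hd y
    calc deriv (w d) (x+1) = deriv (fun y => w d (y+1)) x := (deriv_comp_add_const _ _ _).symm
    _ = deriv (w d) x := by rw [hfe]
  -- second derivative bound
  have claimA : ∀ d, 0 < d → ∀ y, |deriv (deriv (w d)) y| ≤ C / d := by
    intro d hd y
    have hQ : (0:ℝ) < γ ^ 2 + (μ + deriv (w d) y) ^ 2 := by positivity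
    have hQle : γ ^ 2 + (μ + deriv (w d) y) ^ 2 ≤ γ^2 + M^2 := by
      obtain ⟨ha, hb⟩ := abs_le.mp (hgrad d hd y)
      nlinarith
    have hexp : deriv (deriv (w d)) y =
        (Real.sqrt (γ ^ 2 + (μ + deriv (w d) y) ^ 2) + γ * v y - H d) *
          (γ ^ 2 + (μ + deriv (w d) y) ^ 2) / (d * γ ^ 2) := by
      have h := heq d hd y
      field_simp at h ⊢
      nlinarith [h]
    rw [hexp, abs_div, abs_mul]
    have e1 : Real.sqrt (γ ^ 2 + (μ + deriv (w d) y) ^ 2) ≤ Real.sqrt (γ^2 + M^2) :=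
      Real.sqrt_le_sqrt hQle
    have e1' : (0:ℝ) ≤ Real.sqrt (γ ^ 2 + (μ + deriv (w d) y) ^ 2) := Real.sqrt_nonneg _
    have e2 : |γ * v y| ≤ |γ| * B := by
      rw [abs_mul]; exact mul_le_mul_of_nonneg_left (hB y) (abs_nonneg γ)
    have e3 := abs_le.mp e2
    have e4 := abs_le.mp (hHbd d hd)
    have hnum : |Real.sqrt (γ ^ 2 + (μ + deriv (w d) y) ^ 2) + γ * v y - H d| ≤ K := by
      rw [hKdef]; rw [abs_le]; constructor <;> [skip; skip] <;>
        [nlinarith [abs_nonneg γ, mul_nonneg (abs_nonneg γ) hBnn];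
         nlinarith [abs_nonneg γ, mul_nonneg (abs_nonneg γ) hBnn]]
    have hden : |d * γ ^ 2| = d * γ ^ 2 := abs_of_pos (by positivity)
    have hQabs : |γ ^ 2 + (μ + deriv (w d) y) ^ 2| = γ ^ 2 + (μ + deriv (w d) y) ^ 2 :=
      abs_of_pos hQ
    rw [hden, hQabs]
    have step : |Real.sqrt (γ ^ 2 + (μ + deriv (w d) y) ^ 2) + γ * v y - H d| *
        (γ ^ 2 + (μ + deriv (w d) y) ^ 2) ≤ K * (γ^2 + M^2) :=
      mul_le_mul hnum hQle hQ.le hK.le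
    calc _ ≤ K * (γ^2 + M^2) / (d * γ ^ 2) := by
          apply div_le_div_of_nonneg_right step (by positivity) |>.trans_eq rfl
    _ = C / d := by rw [hCdef]; field_simp
  refine ⟨⟨C, hC, claimA⟩, ?_⟩
  -- first derivative bound
  have claimB : ∀ d, 0 < d → ∀ y, |deriv (w d) y| ≤ C / d := by
    intro d hd y
    obtain ⟨hdiff, hdiff', hcont''⟩ := hreg d hd
    have h01 : w d 0 = w d 1 := by
      have := hwper d hd 0; rw [zero_add] at this; exact this.symm
    obtain ⟨c, -, hc0⟩ := exists_deriv_eq_zero (f := w d) (by norm_num : (0:ℝ) < 1)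
      hdiff.continuous.continuousOn h01
    have hper' := hdper d hd
    have hyred : deriv (w d) (c + Int.fract (y - c)) = deriv (w d) y := by
      have h := hper'.sub_int_mul_eq (x := y) (n := ⌊y - c⌋)
      rw [mul_one] at h
      rw [show c + Int.fract (y - c) = y - ⌊y - c⌋ by rw [Int.fract]; ring, h]
    have hmvt : ‖deriv (w d) (c + Int.fract (y - c)) - deriv (w d) c‖ ≤
        (C / d) * ‖(c + Int.fract (y - c)) - c‖ := by
      apply Convex.norm_image_sub_le_of_norm_deriv_le (s := Set.univ)
        (fun x _ => hdiff' x) (fun x _ => claimA d hd x) convex_univ (Set.mem_univ _)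
        (Set.mem_univ _)
    rw [hyred, hc0, sub_zero] at hmvt
    have hfr : ‖(c + Int.fract (y - c)) - c‖ ≤ 1 := by
      rw [show (c + Int.fract (y - c)) - c = Int.fract (y - c) by ring]
      rw [Real.norm_eq_abs, abs_of_nonneg (Int.fract_nonneg _)]
      exact (Int.fract_lt_one _).le
    calc |deriv (w d) y| ≤ (C / d) * ‖(c + Int.fract (y - c)) - c‖ := hmvt
    _ ≤ (C / d) * 1 := mul_le_mul_of_nonneg_left hfr (by positivity)
    _ = C / d := mul_one _
  -- w bound
  have claimC : ∀ d, 0 < d → ∀ y, |w d y| ≤ C / d := by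
    intro d hd y
    obtain ⟨hdiff, -, -⟩ := hreg d hd
    have hyred : w d (0 + Int.fract (y - 0)) = w d y := by
      have h := (hwper d hd).sub_int_mul_eq (x := y) (n := ⌊y - 0⌋)
      rw [mul_one] at h
      rw [show (0:ℝ) + Int.fract (y - 0) = y - ⌊y - 0⌋ by rw [Int.fract]; ring, h]
    have hmvt : ‖w d (0 + Int.fract (y - 0)) - w d 0‖ ≤
        (C / d) * ‖(0 + Int.fract (y - 0)) - 0‖ :=
      Convex.norm_image_sub_le_of_norm_deriv_le (s := Set.univ)
        (fun x _ => hdiff x) (fun x _ => claimB d hd x) convex_univ (Set.mem_univ _)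
        (Set.mem_univ _)
    rw [hyred, hw0 d hd, sub_zero] at hmvt
    have hfr : ‖(0 + Int.fract (y - 0)) - 0‖ ≤ 1 := by
      rw [show ((0:ℝ) + Int.fract (y - 0)) - 0 = Int.fract (y - 0) by ring]
      rw [Real.norm_eq_abs, abs_of_nonneg (Int.fract_nonneg _)]
      exact (Int.fract_lt_one _).le
    calc |w d y| ≤ (C / d) * ‖(0 + Int.fract (y - 0)) - 0‖ := hmvt
    _ ≤ (C / d) * 1 := mul_le_mul_of_nonneg_left hfr (by positivity)
    _ = C / d := mul_one _
  -- generic uniform convergence from the C/d bound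
  have hunif : ∀ (F : ℝ → ℝ → ℝ), (∀ d, 0 < d → ∀ y, |F d y| ≤ C / d) →
      TendstoUniformly F (fun _ => 0) Filter.atTop := by
    intro F hF
    rw [Metric.tendstoUniformly_iff]
    intro ε hε
    filter_upwards [Filter.eventually_gt_atTop (max 0 (C / ε))] with d hd y
    have hd0 : 0 < d := lt_of_le_of_lt (le_max_left _ _) hd
    have hd1 : C / ε < d := lt_of_le_of_lt (le_max_right _ _) hd
    have : C / d < ε := by
      rw [div_lt_iff₀ hd0]
      rw [div_lt_iff₀ hε] at hd1
      linarith [mul_comm d ε]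
    calc dist 0 (F d y) = |F d y| := by rw [dist_comm, Real.dist_eq, sub_zero]
    _ ≤ C / d := hF d hd0 y
    _ < ε := this
  refine ⟨hunif _ claimB, hunif _ claimC, ?_⟩
  -- the integral identity for H
  have hHid : ∀ d, 0 < d → H d = (∫ y in (0:ℝ)..1,
      Real.sqrt (γ ^ 2 + (μ + deriv (w d) y) ^ 2)) + γ * ∫ y in (0:ℝ)..1, v y := by
    intro d hd
    obtain ⟨hdiff, hdiff', hcont''⟩ := hreg d hd
    have hcont' : Continuous (deriv (w d)) := hdiff'.continuous
    set g : ℝ → ℝ := fun y => γ * Real.arctan ((μ + deriv (w d) y) / γ) with hg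
    have hgderiv : ∀ y, HasDerivAt g
        (γ ^ 2 * deriv (deriv (w d)) y / (γ ^ 2 + (μ + deriv (w d) y) ^ 2)) y := by
      intro y
      have hu : HasDerivAt (fun y => (μ + deriv (w d) y) / γ)
          (deriv (deriv (w d)) y / γ) y :=
        (((hdiff' y).hasDerivAt).const_add μ).div_const γ
      have harct := (Real.hasDerivAt_arctan ((μ + deriv (w d) y) / γ)).comp y hu
      have := harct.const_mul γ
      refine this.congr_deriv ?_
      have hQ : (0:ℝ) < γ ^ 2 + (μ + deriv (w d) y) ^ 2 := by positivity
      have h1 : 1 + ((μ + deriv (w d) y) / γ) ^ 2 =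
          (γ ^ 2 + (μ + deriv (w d) y) ^ 2) / γ ^ 2 := by field_simp
      rw [h1]
      field_simp
    have hQcont : Continuous (fun y => γ ^ 2 + (μ + deriv (w d) y) ^ 2) :=
      continuous_const.add ((continuous_const.add hcont').pow 2)
    have hQne : ∀ y, γ ^ 2 + (μ + deriv (w d) y) ^ 2 ≠ 0 := fun y => by positivity
    have hg'cont : Continuous (fun y => γ ^ 2 * deriv (deriv (w d)) y /
        (γ ^ 2 + (μ + deriv (w d) y) ^ 2)) :=
      (continuous_const.mul hcont'').div hQcont hQne
    have hftc : (∫ y in (0:ℝ)..1,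
        γ ^ 2 * deriv (deriv (w d)) y / (γ ^ 2 + (μ + deriv (w d) y) ^ 2)) = g 1 - g 0 :=
      intervalIntegral.integral_eq_sub_of_hasDerivAt (fun x _ => hgderiv x)
        (hg'cont.intervalIntegrable 0 1)
    have hgper : g 1 = g 0 := by
      have := hdper d hd 0
      rw [zero_add] at this
      simp only [hg, this]
    rw [hgper, sub_self] at hftc
    have hsqcont : Continuous (fun y => Real.sqrt (γ ^ 2 + (μ + deriv (w d) y) ^ 2)) :=
      hQcont.sqrt
    have hi1 : IntervalIntegrable (fun y => -d * γ ^ 2 * deriv (deriv (w d)) y /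
        (γ ^ 2 + (μ + deriv (w d) y) ^ 2)) MeasureTheory.volume 0 1 :=
      (((continuous_const.mul hcont'').div hQcont hQne)).intervalIntegrable 0 1
    have hi2 : IntervalIntegrable (fun y => Real.sqrt (γ ^ 2 + (μ + deriv (w d) y) ^ 2))
        MeasureTheory.volume 0 1 := hsqcont.intervalIntegrable 0 1
    have hi3 : IntervalIntegrable (fun y => γ * v y) MeasureTheory.volume 0 1 :=
      (continuous_const.mul hv.continuous).intervalIntegrable 0 1
    have hconst : H d = ∫ y in (0:ℝ)..1,
        (-d * γ ^ 2 * deriv (deriv (w d)) y / (γ ^ 2 + (μ + deriv (w d) y) ^ 2) +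
          Real.sqrt (γ ^ 2 + (μ + deriv (w d) y) ^ 2) + γ * v y) := by
      rw [intervalIntegral.integral_congr (g := fun _ => H d) (fun y _ => heq d hd y)]
      simp
    rw [hconst, intervalIntegral.integral_add (hi1.add hi2) hi3,
      intervalIntegral.integral_add hi1 hi2]
    have hzero : (∫ y in (0:ℝ)..1, -d * γ ^ 2 * deriv (deriv (w d)) y /
        (γ ^ 2 + (μ + deriv (w d) y) ^ 2)) = 0 := by
      have : (fun y => -d * γ ^ 2 * deriv (deriv (w d)) y /
          (γ ^ 2 + (μ + deriv (w d) y) ^ 2)) = fun y => (-d) *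
          (γ ^ 2 * deriv (deriv (w d)) y / (γ ^ 2 + (μ + deriv (w d) y) ^ 2)) := by
        funext y; rw [mul_assoc, mul_div_assoc]
      rw [this, intervalIntegral.integral_const_mul, hftc, mul_zero]
    rw [hzero, zero_add, intervalIntegral.integral_const_mul]
  -- bound |H d - target| ≤ C / d
  have claimD : ∀ d, 0 < d →
      |H d - (Real.sqrt (γ ^ 2 + μ ^ 2) + γ * ∫ y in (0:ℝ)..1, v y)| ≤ C / d := by
    intro d hd
    obtain ⟨hdiff, hdiff', hcont''⟩ := hreg d hd
    have hcont' : Continuous (deriv (w d)) := hdiff'.continuous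
    have hQcont : Continuous (fun y => γ ^ 2 + (μ + deriv (w d) y) ^ 2) :=
      continuous_const.add ((continuous_const.add hcont').pow 2)
    have hsqcont : Continuous (fun y => Real.sqrt (γ ^ 2 + (μ + deriv (w d) y) ^ 2)) :=
      hQcont.sqrt
    rw [hHid d hd]
    have hdiffint : H d - H d = 0 := sub_self _
    have e1 : (Real.sqrt (γ ^ 2 + μ ^ 2) : ℝ) = ∫ y in (0:ℝ)..1, Real.sqrt (γ ^ 2 + μ ^ 2) := by
      simp
    rw [show (∫ y in (0:ℝ)..1, Real.sqrt (γ ^ 2 + (μ + deriv (w d) y) ^ 2)) +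
        γ * (∫ y in (0:ℝ)..1, v y) -
        (Real.sqrt (γ ^ 2 + μ ^ 2) + γ * ∫ y in (0:ℝ)..1, v y) =
        (∫ y in (0:ℝ)..1, Real.sqrt (γ ^ 2 + (μ + deriv (w d) y) ^ 2)) -
        Real.sqrt (γ ^ 2 + μ ^ 2) by ring]
    rw [e1, ← intervalIntegral.integral_sub (hsqcont.intervalIntegrable 0 1)
      (intervalIntegrable_const)]
    calc |∫ y in (0:ℝ)..1, (Real.sqrt (γ ^ 2 + (μ + deriv (w d) y) ^ 2) -
          Real.sqrt (γ ^ 2 + μ ^ 2))|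
        ≤ C / d * |1 - 0| := by
          rw [← Real.norm_eq_abs]
          apply intervalIntegral.norm_integral_le_of_norm_le_const
          intro x _
          rw [Real.norm_eq_abs]
          exact (sqrt_lip' γ μ (deriv (w d) x)).trans (claimB d hd x)
    _ = C / d := by rw [sub_zero, abs_one, mul_one]
  -- final convergence of H
  rw [tendsto_iff_dist_tendsto_zero]
  apply squeeze_zero' (Filter.Eventually.of_forall fun _ => dist_nonneg)
    (g := fun d => C / d)
  · filter_upwards [Filter.eventually_gt_atTop (0:ℝ)] with d hd
    rw [Real.dist_eq]
    exact claimD d hd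
  · exact Filter.Tendsto.div_atTop tendsto_const_nhds Filter.tendsto_id
end
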